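/- arXiv:2003.09490 — 8 statements merged into one kernel-verified Lean document; each statement's English description precedes it below -/
import Mathlib

section
/- Let f₁,…,f_N : [0,1] → [0,1] be increasing homeomorphisms, (p₁,…,p_N) a probability vector, and suppose there exist λ₁,…,λ_N > 0, ε ∈ (0,1), α ∈ (0,1), δ ∈ (0,1) such that fᵢ⁻¹(x) ≤ x/λᵢ for all x ≤ ε and all i, and Σᵢ pᵢ λᵢ^{-α} ≤ (1-δ)^α. Set M = ε^{-α}. Then the Markov operator Pμ(A) = Σᵢ pᵢ μ(fᵢ⁻¹(A)) maps the set P⁻_{M,α} = { μ probability measure on [0,1] : μ([0,x]) ≤ M x^α for all x ∈ [0,1] } into itself. -/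
open Set MeasureTheory

/-- Invariance of the class `P⁻_{M,α}` under the Markov operator of an
iterated function system of increasing interval homeomorphisms satisfying
`fᵢ⁻¹ x ≤ x / lam i` for `x ≤ ε`. -/
theorem stmt2 (N : ℕ) (f : Fin N → ℝ → ℝ) (p lam : Fin N → ℝ) (ε α δ M : ℝ)
    -- the `f i` are increasing homeomorphisms of `[0,1]`
    (hmeas : ∀ i, Measurable (f i))
    (hmono : ∀ i, StrictMonoOn (f i) (Icc 0 1))
    (hmaps : ∀ i, MapsTo (f i) (Icc 0 1) (Icc 0 1))
    (hcont : ∀ i, ContinuousOn (f i) (Icc 0 1))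
    (hsurj : ∀ i, SurjOn (f i) (Icc 0 1) (Icc 0 1))
    (h0 : ∀ i, f i 0 = 0) (h1 : ∀ i, f i 1 = 1)
    -- probability vector
    (hp : ∀ i, 0 ≤ p i) (hp1 : ∑ i, p i = 1)
    -- the constants
    (hlam : ∀ i, 0 < lam i)
    (hε : ε ∈ Ioo (0:ℝ) 1) (hα : α ∈ Ioo (0:ℝ) 1) (hδ : δ ∈ Ioo (0:ℝ) 1)
    (hM : M = ε ^ (-α))
    -- `fᵢ⁻¹ x ≤ x / lam i` for `x ≤ ε`
    (hinv : ∀ i, ∀ x ∈ Icc (0:ℝ) 1, ∀ y ∈ Icc (0:ℝ) 1,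
      f i y = x → x ≤ ε → y ≤ x / lam i)
    (hsum : ∑ i, p i * (lam i) ^ (-α) ≤ (1 - δ) ^ α)
    -- a probability measure on `[0,1]` belonging to `P⁻_{M,α}`
    (μ : Measure ℝ) (hprob : IsProbabilityMeasure μ) (hμsupp : μ (Icc (0:ℝ) 1)ᶜ = 0)
    (hμclass : ∀ x ∈ Icc (0:ℝ) 1, μ (Icc 0 x) ≤ ENNReal.ofReal (M * x ^ α)) :
    ∀ x ∈ Icc (0:ℝ) 1,
      (∑ i, ENNReal.ofReal (p i) • Measure.map (f i) μ) (Icc 0 x)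
        ≤ ENNReal.ofReal (M * x ^ α) := by
  intro x hx
  obtain ⟨hx0, hx1⟩ := hx
  have hα0 : 0 < α := hα.1
  have hM0 : 0 < M := by rw [hM]; exact Real.rpow_pos_of_pos hε.1 _
  have hLHS : (∑ i, ENNReal.ofReal (p i) • Measure.map (f i) μ) (Icc 0 x)
      = ∑ i, ENNReal.ofReal (p i) * μ (f i ⁻¹' Icc 0 x) := by
    rw [Measure.finset_sum_apply]
    refine Finset.sum_congr rfl fun i _ => ?_
    rw [Measure.smul_apply, smul_eq_mul, Measure.map_apply (hmeas i) measurableSet_Icc]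
  rw [hLHS]
  by_cases hcase : ε ≤ x
  · -- `x ≥ ε` : the bound is at least `1`
    have h1le : (1:ℝ) ≤ M * x ^ α := by
      rw [hM, Real.rpow_neg hε.1.le]
      rw [inv_mul_eq_div, le_div_iff₀ (Real.rpow_pos_of_pos hε.1 _), one_mul]
      exact Real.rpow_le_rpow hε.1.le hcase hα0.le
    calc ∑ i, ENNReal.ofReal (p i) * μ (f i ⁻¹' Icc 0 x)
        ≤ ∑ i, ENNReal.ofReal (p i) * 1 := by
          gcongr with i
          exact prob_le_one
      _ = ENNReal.ofReal 1 := by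
          simp only [mul_one]
          rw [← ENNReal.ofReal_sum_of_nonneg (fun i _ => hp i), hp1]
      _ ≤ ENNReal.ofReal (M * x ^ α) := ENNReal.ofReal_le_ofReal h1le
  · push_neg at hcase
    have key : ∀ i, μ (f i ⁻¹' Icc 0 x)
        ≤ ENNReal.ofReal (M * x ^ α * (lam i) ^ (-α)) := by
      intro i
      obtain ⟨y, hy, hfy⟩ := hsurj i ⟨hx0, hx1⟩
      have hyle : y ≤ x / lam i := hinv i x ⟨hx0, hx1⟩ y hy hfy hcase.le
      have hsub : f i ⁻¹' Icc 0 x ∩ Icc 0 1 ⊆ Icc 0 y := by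
        rintro z ⟨hz1, hz2⟩
        refine ⟨hz2.1, ?_⟩
        by_contra h
        push_neg at h
        have := (hmono i) hy hz2 h
        rw [hfy] at this
        exact absurd hz1.2 (not_le.2 this)
      have hμy : μ (f i ⁻¹' Icc 0 x) ≤ μ (Icc 0 y) := by
        calc μ (f i ⁻¹' Icc 0 x)
            ≤ μ ((f i ⁻¹' Icc 0 x ∩ Icc 0 1) ∪ (Icc 0 1)ᶜ) := by
              apply measure_mono
              intro z hz
              by_cases hz1 : z ∈ Icc (0:ℝ) 1
              · exact Or.inl ⟨hz, hz1⟩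
              · exact Or.inr hz1
          _ ≤ μ (f i ⁻¹' Icc 0 x ∩ Icc 0 1) + μ (Icc 0 1)ᶜ := measure_union_le _ _
          _ = μ (f i ⁻¹' Icc 0 x ∩ Icc 0 1) := by rw [hμsupp, add_zero]
          _ ≤ μ (Icc 0 y) := measure_mono hsub
      refine hμy.trans ((hμclass y hy).trans (ENNReal.ofReal_le_ofReal ?_))
      have hyα : y ^ α ≤ x ^ α * (lam i) ^ (-α) := by
        have : y ^ α ≤ (x / lam i) ^ α :=
          Real.rpow_le_rpow hy.1 hyle hα0.le
        rwa [Real.div_rpow hx0 (hlam i).le, div_eq_mul_inv,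
          ← Real.rpow_neg (hlam i).le] at this
      calc M * y ^ α ≤ M * (x ^ α * (lam i) ^ (-α)) := by
            exact mul_le_mul_of_nonneg_left hyα hM0.le
        _ = M * x ^ α * (lam i) ^ (-α) := by ring
    calc ∑ i, ENNReal.ofReal (p i) * μ (f i ⁻¹' Icc 0 x)
        ≤ ∑ i, ENNReal.ofReal (p i) * ENNReal.ofReal (M * x ^ α * (lam i) ^ (-α)) := by
          gcongr with i
          exact key i
      _ = ENNReal.ofReal (∑ i, p i * (M * x ^ α * (lam i) ^ (-α))) := by
          rw [ENNReal.ofReal_sum_of_nonneg]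
          · refine Finset.sum_congr rfl fun i _ => ?_
            rw [ENNReal.ofReal_mul (hp i)]
          · intro i _
            have h1 : 0 ≤ M * x ^ α * (lam i) ^ (-α) :=
              mul_nonneg (mul_nonneg hM0.le (Real.rpow_nonneg hx0 _))
                (Real.rpow_nonneg (hlam i).le _)
            exact mul_nonneg (hp i) h1
      _ ≤ ENNReal.ofReal (M * x ^ α) := by
          apply ENNReal.ofReal_le_ofReal
          have heq : ∑ i, p i * (M * x ^ α * (lam i) ^ (-α))
              = M * x ^ α * ∑ i, p i * (lam i) ^ (-α) := by
            rw [Finset.mul_sum]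
            refine Finset.sum_congr rfl fun i _ => ?_
            ring
          rw [heq]
          have h1δ : (1 - δ) ^ α ≤ 1 :=
            Real.rpow_le_one (by linarith [hδ.2]) (by linarith [hδ.1]) hα0.le
          have hMx : 0 ≤ M * x ^ α := mul_nonneg hM0.le (Real.rpow_nonneg hx0 _)
          calc M * x ^ α * ∑ i, p i * (lam i) ^ (-α)
              ≤ M * x ^ α * (1 - δ) ^ α := mul_le_mul_of_nonneg_left hsum hMx
            _ ≤ M * x ^ α * 1 := mul_le_mul_of_nonneg_left h1δ hMx
            _ = M * x ^ α := mul_one _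
end

section
/- Let f₁,…,f_N : [0,1] → [0,1] be increasing homeomorphisms with fᵢ(0)=0, fᵢ(1)=1, and (p₁,…,p_N) a probability vector with all pᵢ > 0. Suppose for every x ∈ (0,1) there exist indices i, j with fᵢ(x) < x < f_j(x). Then for any probability measure μ on (0,1) invariant under the Markov operator Pμ(A) = Σᵢ pᵢ μ(fᵢ⁻¹(A)), both 0 and 1 belong to the support of μ (viewing μ as a measure on [0,1]). -/
/-!
If `μ` gave no mass to some interval `(0, ε)`, let `a` be the largest `t` with `μ (0, t) = 0`;
then `0 < a < 1`. Some map moves `a` to the left, so by continuity it maps a slightly longer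
interval `(0, b)`, `b > a`, into `(0, a)`. Invariance with positive weights makes `μ (0, b) = 0`,
contradicting the maximality of `a`. The endpoint `1` follows by conjugating with `x ↦ 1 - x`.
-/

open Set MeasureTheory Filter Topology
open scoped ENNReal

section Invariant

variable {α ι : Type*} [MeasurableSpace α] [Fintype ι] {c : ι → ℝ≥0∞} {f : ι → α → α}
  {μ : Measure α}

theorem measure_eq_sum_preimage_of_invariant (hf : ∀ i, Measurable (f i))
    (hinv : ∑ i, c i • μ.map (f i) = μ) {s : Set α} (hs : MeasurableSet s) :
    μ s = ∑ i, c i * μ (f i ⁻¹' s) := by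
  conv_lhs => rw [← hinv]
  simp only [Measure.coe_finsetSum, Finset.sum_apply, Measure.smul_apply,
    Measure.map_apply (hf _) hs, smul_eq_mul]

theorem measure_preimage_eq_zero_of_invariant (hf : ∀ i, Measurable (f i))
    (hinv : ∑ i, c i • μ.map (f i) = μ) {i : ι} (hc : c i ≠ 0) {s : Set α}
    (hs : MeasurableSet s) (hμs : μ s = 0) : μ (f i ⁻¹' s) = 0 := by
  have hle : c i * μ (f i ⁻¹' s) ≤ μ s := by
    rw [measure_eq_sum_preimage_of_invariant hf hinv hs]
    exact Finset.single_le_sum (f := fun j => c j * μ (f j ⁻¹' s))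
      (fun _ _ => zero_le) (Finset.mem_univ i)
  rw [hμs, nonpos_iff_eq_zero, mul_eq_zero] at hle
  exact hle.resolve_left hc

theorem map_invariant_of_semiconj {β : Type*} [MeasurableSpace β] {g : ι → β → β} {r : α → β}
    (hr : Measurable r) (hf : ∀ i, Measurable (f i)) (hg : ∀ i, Measurable (g i))
    (hconj : ∀ i, r ∘ f i = g i ∘ r) (hinv : ∑ i, c i • μ.map (f i) = μ) :
    ∑ i, c i • (μ.map r).map (g i) = μ.map r := by
  have hmap : ∀ i, (μ.map r).map (g i) = (μ.map (f i)).map r := fun i => by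
    rw [Measure.map_map (hg i) hr, ← hconj i, Measure.map_map hr (hf i)]
  conv_rhs => rw [← hinv, ← Measure.mapₗ_apply_of_measurable hr, map_sum]
  simp only [hmap, Measure.mapₗ_apply_of_measurable hr, Measure.map_smul]

end Invariant

theorem measure_Ioo_eq_zero_of_forall_lt {μ : Measure ℝ} {l a : ℝ}
    (h : ∀ t < a, μ (Ioo l t) = 0) : μ (Ioo l a) = 0 := by
  have hcover : Ioo l a ⊆ ⋃ q : {q : ℚ // (q : ℝ) < a}, Ioo l (q : ℝ) := fun x hx => by
    obtain ⟨q, hxq, hqa⟩ := exists_rat_btwn hx.2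
    exact mem_iUnion.mpr ⟨⟨q, hqa⟩, hx.1, hxq⟩
  exact measure_mono_null hcover (measure_iUnion_null fun q => h _ q.2)

theorem exists_Ioo_subset_preimage_Ioo {g : ℝ → ℝ} {a : ℝ} (hmono : StrictMonoOn g (Icc 0 1))
    (hcont : ContinuousOn g (Icc 0 1)) (h0 : g 0 = 0) (ha : a ∈ Ioo 0 1) (hga : g a < a) :
    ∃ b, a < b ∧ Ioo 0 b ⊆ g ⁻¹' Ioo 0 a := by
  have hnear : ∀ᶠ x in 𝓝 a, g x < a :=
    (hcont.continuousAt (Icc_mem_nhds ha.1 ha.2)).eventually (gt_mem_nhds hga)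
  obtain ⟨u, hau, hu⟩ := exists_Ico_subset_of_mem_nhds hnear ⟨a + 1, by linarith⟩
  refine ⟨min u 1, lt_min hau ha.2, fun x hx => ?_⟩
  have hxI : x ∈ Icc (0 : ℝ) 1 := ⟨hx.1.le, hx.2.le.trans (min_le_right _ _)⟩
  refine ⟨h0 ▸ hmono (left_mem_Icc.mpr zero_le_one) hxI hx.1, ?_⟩
  rcases le_or_gt x a with hxa | hxa
  · exact (hmono.monotoneOn hxI (Ioo_subset_Icc_self ha) hxa).trans_lt hga
  · exact hu ⟨hxa.le, hx.2.trans_le (min_le_left _ _)⟩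

section Endpoints

variable {ι : Type*} [Fintype ι] {f : ι → ℝ → ℝ} {c : ι → ℝ≥0∞} {μ : Measure ℝ}

theorem measure_pos_of_mem_nhds_zero (hmeas : ∀ i, Measurable (f i))
    (hmono : ∀ i, StrictMonoOn (f i) (Icc 0 1)) (hcont : ∀ i, ContinuousOn (f i) (Icc 0 1))
    (h0 : ∀ i, f i 0 = 0) (hc : ∀ i, c i ≠ 0) (hleft : ∀ x ∈ Ioo (0 : ℝ) 1, ∃ i, f i x < x)
    (hμ : μ (Ioo 0 1) ≠ 0) (hinv : ∑ i, c i • μ.map (f i) = μ) {U : Set ℝ} (hU : U ∈ 𝓝 0) :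
    0 < μ U := by
  obtain ⟨ε, hε, hεU⟩ := exists_Ico_subset_of_mem_nhds hU ⟨1, one_pos⟩
  refine (pos_iff_ne_zero.mpr fun hε0 => ?_).trans_le (measure_mono (Ioo_subset_Ico_self.trans hεU))
  set S := {t : ℝ | μ (Ioo 0 t) = 0}
  have hS1 : ∀ t ∈ S, t ≤ 1 := fun t ht => by
    by_contra! h1t
    exact hμ (measure_mono_null (Ioo_subset_Ioo_right h1t.le) ht)
  have hbdd : BddAbove S := ⟨1, hS1⟩
  set a := sSup S
  have hnull : μ (Ioo 0 a) = 0 := measure_Ioo_eq_zero_of_forall_lt fun t hta => by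
    obtain ⟨s, hs, hts⟩ := exists_lt_of_lt_csSup ⟨ε, hε0⟩ hta
    exact measure_mono_null (Ioo_subset_Ioo_right hts.le) hs
  have ha1 : a < 1 := lt_of_le_of_ne (hS1 a hnull) fun ha => hμ (ha ▸ hnull)
  have ha0 : 0 < a := hε.trans_le (le_csSup hbdd hε0)
  obtain ⟨i, hi⟩ := hleft a ⟨ha0, ha1⟩
  obtain ⟨b, hab, hsub⟩ := exists_Ioo_subset_preimage_Ioo (hmono i) (hcont i) (h0 i) ⟨ha0, ha1⟩ hi
  have hb : b ∈ S := measure_mono_null hsub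
    (measure_preimage_eq_zero_of_invariant hmeas hinv (hc i) measurableSet_Ioo hnull)
  exact (le_csSup hbdd hb).not_gt hab

theorem measure_pos_of_mem_nhds_one (hmeas : ∀ i, Measurable (f i))
    (hmono : ∀ i, StrictMonoOn (f i) (Icc 0 1)) (hcont : ∀ i, ContinuousOn (f i) (Icc 0 1))
    (h1 : ∀ i, f i 1 = 1) (hc : ∀ i, c i ≠ 0) (hright : ∀ x ∈ Ioo (0 : ℝ) 1, ∃ i, x < f i x)
    (hμ : μ (Ioo 0 1) ≠ 0) (hinv : ∑ i, c i • μ.map (f i) = μ) {U : Set ℝ} (hU : U ∈ 𝓝 1) :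
    0 < μ U := by
  set r : ℝ → ℝ := fun x => 1 - x
  have hr : MeasurableEmbedding r := measurableEmbedding_subLeft 1
  have hrI : MapsTo r (Icc 0 1) (Icc 0 1) := fun x hx => ⟨by linarith [hx.2], by linarith [hx.1]⟩
  set g : ι → ℝ → ℝ := fun i x => 1 - f i (1 - x)
  have hgmono : ∀ i, StrictMonoOn (g i) (Icc 0 1) := fun i x hx y hy hxy => by
    have := hmono i (hrI hy) (hrI hx) (by linarith)
    simp only [g]
    linarith
  have hgcont : ∀ i, ContinuousOn (g i) (Icc 0 1) := fun i =>
    continuousOn_const.sub ((hcont i).comp (continuous_const.sub continuous_id).continuousOn hrI)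
  have hgleft : ∀ x ∈ Ioo (0 : ℝ) 1, ∃ i, g i x < x := fun x hx => by
    obtain ⟨i, hi⟩ := hright (1 - x) ⟨by linarith [hx.2], by linarith [hx.1]⟩
    exact ⟨i, by simp only [g]; linarith⟩
  have hgmeas : ∀ i, Measurable (g i) := fun i =>
    measurable_const.sub ((hmeas i).comp hr.measurable)
  have hconj : ∀ i, r ∘ f i = g i ∘ r := fun i => funext fun x => by simp [r, g]
  have hrU : r ⁻¹' U ∈ 𝓝 0 :=
    (continuous_const.sub continuous_id).continuousAt.preimage_mem_nhds (by simpa [r] using hU)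
  have hpos := measure_pos_of_mem_nhds_zero hgmeas hgmono hgcont (fun i => by simp [g, h1]) hc
    hgleft (by rwa [hr.map_apply, preimage_const_sub_Ioo, sub_zero, sub_self])
    (map_invariant_of_semiconj hr.measurable hmeas hgmeas hconj hinv) hrU
  rwa [hr.map_apply, ← preimage_comp, show r ∘ r = id from funext fun x => sub_sub_cancel 1 x,
    preimage_id] at hpos

end Endpoints

theorem stmt4_general (N : ℕ) (f : Fin N → ℝ → ℝ) (p : Fin N → ℝ)
    (hmeas : ∀ i, Measurable (f i))
    (hmono : ∀ i, StrictMonoOn (f i) (Icc 0 1))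
    (hcont : ∀ i, ContinuousOn (f i) (Icc 0 1))
    (h0 : ∀ i, f i 0 = 0) (h1 : ∀ i, f i 1 = 1)
    (hp : ∀ i, 0 < p i)
    (hminmax : ∀ x ∈ Ioo (0:ℝ) 1, (∃ i, f i x < x) ∧ (∃ j, x < f j x))
    (μ : Measure ℝ)
    (hμ01 : μ (Ioo (0:ℝ) 1) = 1)
    (hinv : (∑ i, ENNReal.ofReal (p i) • Measure.map (f i) μ) = μ) :
    (∀ U : Set ℝ, IsOpen U → (0:ℝ) ∈ U → 0 < μ U) ∧
    (∀ U : Set ℝ, IsOpen U → (1:ℝ) ∈ U → 0 < μ U) := by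
  have hc : ∀ i, ENNReal.ofReal (p i) ≠ 0 := fun i => (ENNReal.ofReal_pos.mpr (hp i)).ne'
  have hμ : μ (Ioo 0 1) ≠ 0 := hμ01 ▸ one_ne_zero
  exact ⟨fun U hU h0U => measure_pos_of_mem_nhds_zero hmeas hmono hcont h0 hc
      (fun x hx => (hminmax x hx).1) hμ hinv (hU.mem_nhds h0U),
    fun U hU h1U => measure_pos_of_mem_nhds_one hmeas hmono hcont h1 hc
      (fun x hx => (hminmax x hx).2) hμ hinv (hU.mem_nhds h1U)⟩

/-- For an admissible-type iterated function system of increasing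
homeomorphisms of `[0,1]` fixing the endpoints, with all probabilities positive and
such that every interior point is moved left by some map and right by another,
every invariant probability measure concentrated on `(0,1)` has both `0` and `1`
in its (closed) support: every open neighbourhood of `0` or of `1` has positive mass. -/
theorem stmt4 (N : ℕ) (f : Fin N → ℝ → ℝ) (p : Fin N → ℝ)
    (hmeas : ∀ i, Measurable (f i))
    (hmono : ∀ i, StrictMonoOn (f i) (Icc 0 1))
    (hmaps : ∀ i, MapsTo (f i) (Icc 0 1) (Icc 0 1))
    (hcont : ∀ i, ContinuousOn (f i) (Icc 0 1))
    (hsurj : ∀ i, SurjOn (f i) (Icc 0 1) (Icc 0 1))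
    (h0 : ∀ i, f i 0 = 0) (h1 : ∀ i, f i 1 = 1)
    (hp : ∀ i, 0 < p i) (hp1 : ∑ i, p i = 1)
    (hminmax : ∀ x ∈ Ioo (0:ℝ) 1, (∃ i, f i x < x) ∧ (∃ j, x < f j x))
    (μ : Measure ℝ) (hprob : IsProbabilityMeasure μ)
    (hμ01 : μ (Ioo (0:ℝ) 1) = 1)
    (hinv : (∑ i, ENNReal.ofReal (p i) • Measure.map (f i) μ) = μ) :
    (∀ U : Set ℝ, IsOpen U → (0:ℝ) ∈ U → 0 < μ U) ∧
    (∀ U : Set ℝ, IsOpen U → (1:ℝ) ∈ U → 0 < μ U) :=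
  stmt4_general N f p hmeas hmono hcont h0 h1 hp hminmax μ hμ01 hinv
end

section
/- Let f₁,…,f_N : [0,1] → [0,1] be increasing homeomorphisms fixing 0 and 1, and (p₁,…,p_N) a probability vector with all pᵢ > 0. Suppose for every x ∈ (0,1) there exist i, j with fᵢ(x) < x < f_j(x). Then the Markov operator P has at most one invariant probability measure supported on (0,1). -/
/-!
Write `gᵢ` for the inverse of `fᵢ` on `(0, 1)`. For a measure `μ` invariant and concentrated on
`(0, 1)`, both the atom masses `x ↦ μ {x}` and the distribution function `F_μ` satisfy the
mean-value identity `h x = ∑ pᵢ h (gᵢ x)` on `(0, 1)`. Such functions obey a maximum principle: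
at the largest maximiser `s` of `h`, all the values `h (gᵢ s)` equal the maximum, while if
`s ∈ (0, 1)` some `fᵢ s < s`, i.e. `gᵢ s > s` is a larger maximiser. For the atom masses the
largest maximiser exists because only finitely many atoms are heavy, and it cannot lie outside
`(0, 1)`, so invariant measures are atomless. Then `F_μ - F_ν` is continuous on `[0, 1]` and
vanishes at `0` and `1`, so its maximum is `0`; by symmetry `F_μ = F_ν`.
-/

open Set MeasureTheory ProbabilityTheory Filter Function

section MaximumPrinciple

variable {ι α : Type*} [Fintype ι] {p : ι → ℝ}

lemma eq_of_le_of_eq_sum_mul {a : ℝ} {b : ι → ℝ} (hp : ∀ i, 0 < p i) (hp1 : ∑ i, p i = 1)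
    (hb : ∀ i, b i ≤ a) (ha : a = ∑ i, p i * b i) (i : ι) : b i = a := by
  have hsum : ∑ j, p j * b j = ∑ j, p j * a := by rw [← Finset.sum_mul, hp1, one_mul, ← ha]
  have hi := (Finset.sum_eq_sum_iff_of_le fun j _ => mul_le_mul_of_nonneg_left (hb j) (hp j).le).1
    hsum i (Finset.mem_univ i)
  exact mul_left_cancel₀ (hp i).ne' hi

lemma notMem_of_isGreatest_isMaxOn [LinearOrder α] {g : ι → α → α} {h : α → ℝ} {U D : Set α}
    {s : α} (hp : ∀ i, 0 < p i) (hp1 : ∑ i, p i = 1)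
    (hmean : ∀ x ∈ U, h x = ∑ i, p i * h (g i x)) (hg : ∀ i, MapsTo (g i) U D)
    (hup : ∀ x ∈ U, ∃ i, x < g i x) (hs : IsGreatest {x ∈ D | IsMaxOn h D x} s) : s ∉ U := by
  intro hsU
  obtain ⟨i, hi⟩ := hup s hsU
  have hgi : h (g i s) = h s :=
    eq_of_le_of_eq_sum_mul hp hp1 (fun j => hs.1.2 (hg j hsU)) (hmean s hsU) i
  have hgi_max : g i s ∈ {x ∈ D | IsMaxOn h D x} :=
    ⟨hg i hsU, fun y hy => hgi ▸ hs.1.2 hy⟩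
  exact (hs.2 hgi_max).not_gt hi

lemma IsCompact.exists_isGreatest_isMaxOn [LinearOrder α] [TopologicalSpace α]
    [OrderClosedTopology α] {D : Set α} {h : α → ℝ} (hD : IsCompact D) (hne : D.Nonempty)
    (hh : ContinuousOn h D) : ∃ s, IsGreatest {x ∈ D | IsMaxOn h D x} s := by
  obtain ⟨x₀, hx₀, hmax⟩ := hD.exists_isMaxOn hne hh
  have hmaximizers : {x ∈ D | IsMaxOn h D x} = D ∩ h ⁻¹' {h x₀} := by
    ext x
    constructor
    · rintro ⟨hx, hxmax⟩
      exact ⟨hx, le_antisymm (hmax hx) (hxmax hx₀)⟩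
    · rintro ⟨hx, hx₀x⟩
      exact ⟨hx, fun y hy => (hmax hy).trans_eq hx₀x.symm⟩
  rw [hmaximizers]
  exact (hD.of_isClosed_subset (hh.preimage_isClosed_of_isClosed hD.isClosed isClosed_singleton)
    inter_subset_left).exists_isGreatest ⟨x₀, hx₀, rfl⟩

end MaximumPrinciple

-- Only finitely many atoms have mass at least `μ {z}`.
lemma exists_isGreatest_isMaxOn_measureReal_singleton {α : Type*} [MeasurableSpace α]
    [MeasurableSingletonClass α] [LinearOrder α] [TopologicalSpace α] [ClosedIciTopology α]
    (μ : Measure α) [IsFiniteMeasure μ] {z : α} (hz : μ {z} ≠ 0) :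
    ∃ s, IsGreatest {x ∈ univ | IsMaxOn (fun x => μ.real {x}) univ x} s := by
  set A : α → ℝ := fun x => μ.real {x}
  have hA : ∀ x y, A x ≤ A y ↔ μ {x} ≤ μ {y} := fun x y =>
    ENNReal.toReal_le_toReal (measure_ne_top μ _) (measure_ne_top μ _)
  have hfin : {x | μ {z} ≤ μ {x}}.Finite :=
    Measure.finite_const_le_meas_of_disjoint_iUnion μ (pos_iff_ne_zero.2 hz)
      measurableSet_singleton (fun x y hxy => disjoint_singleton.2 hxy) (measure_ne_top μ _)
  obtain ⟨x₀, hx₀, hx₀max⟩ := exists_max_image _ A hfin ⟨z, le_refl (μ {z})⟩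
  have hmax : IsMaxOn A univ x₀ := fun y _ => by
    by_cases hy : μ {z} ≤ μ {y}
    · exact hx₀max y hy
    · exact (hA y x₀).2 ((not_le.1 hy).le.trans hx₀)
  refine (hfin.subset ?_).isCompact.exists_isGreatest ⟨x₀, mem_univ _, hmax⟩
  exact fun x hx => hx₀.trans ((hA x₀ x).1 (hx.2 (mem_univ x₀)))

lemma continuous_cdf (μ : Measure ℝ) [IsProbabilityMeasure μ] [NullSingletonClass μ] :
    Continuous (cdf μ) := by
  refine continuous_iff_continuousAt.2 fun x => ?_
  rw [(monotone_cdf μ).continuousAt_iff_leftLim_eq_rightLim]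
  have hjump : cdf μ x - leftLim (cdf μ) x ≤ 0 := by
    rw [← ENNReal.ofReal_eq_zero, ← StieltjesFunction.measure_singleton, measure_cdf,
      measure_singleton]
  have hleft : leftLim (cdf μ) x = cdf μ x :=
    le_antisymm ((monotone_cdf μ).leftLim_le le_rfl) (by linarith)
  rw [hleft, rightLim_eq_of_tendsto (((cdf μ).right_continuous x).mono Ioi_subset_Ici_self)]

lemma surjOn_Ioo_of_surjOn_Icc {f : ℝ → ℝ} (hsurj : SurjOn f (Icc 0 1) (Icc 0 1))
    (h0 : f 0 = 0) (h1 : f 1 = 1) : SurjOn f (Ioo 0 1) (Ioo 0 1) := by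
  intro x hx
  obtain ⟨y, hy, rfl⟩ := hsurj (Ioo_subset_Icc_self hx)
  refine ⟨y, ⟨hy.1.lt_of_ne ?_, hy.2.lt_of_ne ?_⟩, rfl⟩
  · rintro rfl
    exact hx.1.ne' h0
  · rintro rfl
    exact hx.2.ne h1

section InverseBranch

variable {f : ℝ → ℝ} {U : Set ℝ} {x : ℝ}

lemma preimage_Iic_inter_eq (hmono : StrictMonoOn f U) (hsurj : SurjOn f U U) (hx : x ∈ U) :
    f ⁻¹' Iic x ∩ U = Iic (invFunOn f U x) ∩ U := by
  ext y
  refine and_congr_left fun hy => ?_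
  conv_lhs => rw [mem_preimage, mem_Iic, ← hsurj.rightInvOn_invFunOn hx]
  exact hmono.le_iff_le hy (hsurj.mapsTo_invFunOn hx)

lemma preimage_singleton_inter_eq (hmono : StrictMonoOn f U) (hsurj : SurjOn f U U)
    (hx : x ∈ U) : f ⁻¹' {x} ∩ U = {invFunOn f U x} ∩ U := by
  ext y
  refine and_congr_left fun hy => ?_
  conv_lhs => rw [mem_preimage, mem_singleton_iff, ← hsurj.rightInvOn_invFunOn hx]
  exact hmono.injOn.eq_iff hy (hsurj.mapsTo_invFunOn hx)

lemma lt_invFunOn_of_lt (hmono : StrictMonoOn f U) (hsurj : SurjOn f U U) (hx : x ∈ U)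
    (hfx : f x < x) : x < invFunOn f U x := by
  rw [← hmono.lt_iff_lt hx (hsurj.mapsTo_invFunOn hx), hsurj.rightInvOn_invFunOn hx]
  exact hfx

end InverseBranch

section Invariance

variable {ι : Type*} [Fintype ι] {f : ι → ℝ → ℝ} {p : ι → ℝ} {U : Set ℝ} {μ : Measure ℝ}

lemma measureReal_eq_sum_of_preimage_inter_eq [IsFiniteMeasure μ] (hmeas : ∀ i, Measurable (f i))
    (hp : ∀ i, 0 ≤ p i) (hinv : (∑ i, ENNReal.ofReal (p i) • Measure.map (f i) μ) = μ)
    (hμU : ∀ᵐ y ∂μ, y ∈ U) {s : Set ℝ} (hs : MeasurableSet s) {t : ι → Set ℝ}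
    (hst : ∀ i, f i ⁻¹' s ∩ U = t i ∩ U) : μ.real s = ∑ i, p i * μ.real (t i) := by
  have hpre : ∀ i, μ.real (f i ⁻¹' s) = μ.real (t i) := fun i =>
    measureReal_congr <| eventuallyEq_set.2 <| hμU.mono fun y hy => by
      simpa [hy] using congrArg (y ∈ ·) (hst i)
  conv_lhs => rw [← hinv]
  simp only [measureReal_def, Measure.finsetSum_apply, Measure.smul_apply,
    Measure.map_apply (hmeas _) hs, smul_eq_mul]
  rw [ENNReal.toReal_sum fun i _ => ENNReal.mul_ne_top ENNReal.ofReal_ne_top (measure_ne_top μ _)]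
  refine Finset.sum_congr rfl fun i _ => ?_
  rw [ENNReal.toReal_mul, ENNReal.toReal_ofReal (hp i), ← measureReal_def, hpre, measureReal_def]

lemma measureReal_singleton_eq_sum [IsFiniteMeasure μ] (hmeas : ∀ i, Measurable (f i))
    (hp : ∀ i, 0 ≤ p i) (hmono : ∀ i, StrictMonoOn (f i) U) (hsurj : ∀ i, SurjOn (f i) U U)
    (hinv : (∑ i, ENNReal.ofReal (p i) • Measure.map (f i) μ) = μ) (hμU : ∀ᵐ y ∂μ, y ∈ U)
    {x : ℝ} (hx : x ∈ U) : μ.real {x} = ∑ i, p i * μ.real {invFunOn (f i) U x} :=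
  measureReal_eq_sum_of_preimage_inter_eq hmeas hp hinv hμU (measurableSet_singleton x)
    fun i => preimage_singleton_inter_eq (hmono i) (hsurj i) hx

lemma cdf_eq_sum_cdf_invFunOn [IsProbabilityMeasure μ] (hmeas : ∀ i, Measurable (f i))
    (hp : ∀ i, 0 ≤ p i) (hmono : ∀ i, StrictMonoOn (f i) U) (hsurj : ∀ i, SurjOn (f i) U U)
    (hinv : (∑ i, ENNReal.ofReal (p i) • Measure.map (f i) μ) = μ) (hμU : ∀ᵐ y ∂μ, y ∈ U)
    {x : ℝ} (hx : x ∈ U) : cdf μ x = ∑ i, p i * cdf μ (invFunOn (f i) U x) := by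
  simp only [cdf_eq_real]
  exact measureReal_eq_sum_of_preimage_inter_eq hmeas hp hinv hμU measurableSet_Iic
    fun i => preimage_Iic_inter_eq (hmono i) (hsurj i) hx

lemma nullSingletonClass_of_invariant [IsFiniteMeasure μ] (hmeas : ∀ i, Measurable (f i))
    (hp : ∀ i, 0 < p i) (hp1 : ∑ i, p i = 1) (hmono : ∀ i, StrictMonoOn (f i) U)
    (hsurj : ∀ i, SurjOn (f i) U U) (hdown : ∀ x ∈ U, ∃ i, f i x < x)
    (hinv : (∑ i, ENNReal.ofReal (p i) • Measure.map (f i) μ) = μ) (hμU : ∀ᵐ y ∂μ, y ∈ U) :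
    NullSingletonClass μ := by
  refine ⟨fun z => by_contra fun hz => ?_⟩
  obtain ⟨s, hs⟩ := exists_isGreatest_isMaxOn_measureReal_singleton μ hz
  have hsU : s ∈ U := by
    have hspos : 0 < μ.real {s} :=
      (ENNReal.toReal_pos hz (measure_ne_top μ _)).trans_le (hs.1.2 (mem_univ z))
    by_contra hsU
    have hs0 : μ {s} = 0 := measure_mono_null (singleton_subset_iff.2 hsU) (ae_iff.1 hμU)
    simp [measureReal_def, hs0] at hspos
  exact notMem_of_isGreatest_isMaxOn hp hp1
    (fun x hx => measureReal_singleton_eq_sum hmeas (fun i => (hp i).le) hmono hsurj hinv hμU hx)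
    (fun i => mapsTo_univ _ _)
    (fun x hx => (hdown x hx).imp fun i => lt_invFunOn_of_lt (hmono i) (hsurj i) hx) hs hsU

end Invariance

section UnitInterval

variable {μ ν : Measure ℝ} {x : ℝ}

lemma cdf_eq_zero_of_nonpos [IsProbabilityMeasure μ] (hμ : μ (Ioo 0 1) = 1) (hx : x ≤ 0) :
    cdf μ x = 0 := by
  have hcompl : μ (Ioo 0 1)ᶜ = 0 := (prob_compl_eq_zero_iff measurableSet_Ioo).2 hμ
  have hIic : Iic x ⊆ (Ioo 0 1)ᶜ := fun y hy hy' => hy'.1.not_ge (le_trans hy hx)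
  rw [cdf_eq_real, measureReal_def, measure_mono_null hIic hcompl, ENNReal.toReal_zero]

lemma cdf_eq_one_of_one_le [IsProbabilityMeasure μ] (hμ : μ (Ioo 0 1) = 1) (hx : 1 ≤ x) :
    cdf μ x = 1 := by
  refine le_antisymm (cdf_le_one μ x) ?_
  calc (1 : ℝ) = μ.real (Ioo 0 1) := by rw [measureReal_def, hμ, ENNReal.toReal_one]
    _ ≤ cdf μ x := by
      rw [cdf_eq_real]
      exact measureReal_mono fun y hy => hy.2.le.trans hx

lemma cdf_eq_cdf_of_notMem_Ioo [IsProbabilityMeasure μ] [IsProbabilityMeasure ν]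
    (hμ : μ (Ioo 0 1) = 1) (hν : ν (Ioo 0 1) = 1) (hx : x ∉ Ioo 0 1) : cdf μ x = cdf ν x := by
  rcases le_or_gt x 0 with hx0 | hx0
  · rw [cdf_eq_zero_of_nonpos hμ hx0, cdf_eq_zero_of_nonpos hν hx0]
  · have hx1 : 1 ≤ x := not_lt.1 fun hx1 => hx ⟨hx0, hx1⟩
    rw [cdf_eq_one_of_one_le hμ hx1, cdf_eq_one_of_one_le hν hx1]

variable {ι : Type*} [Fintype ι] {f : ι → ℝ → ℝ} {p : ι → ℝ}

lemma cdf_le_cdf_of_invariant [IsProbabilityMeasure μ] [IsProbabilityMeasure ν]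
    (hmeas : ∀ i, Measurable (f i)) (hp : ∀ i, 0 < p i) (hp1 : ∑ i, p i = 1)
    (hmono : ∀ i, StrictMonoOn (f i) (Ioo 0 1)) (hsurj : ∀ i, SurjOn (f i) (Ioo 0 1) (Ioo 0 1))
    (hdown : ∀ x ∈ Ioo (0 : ℝ) 1, ∃ i, f i x < x) (hμ : μ (Ioo 0 1) = 1) (hν : ν (Ioo 0 1) = 1)
    (hinvμ : (∑ i, ENNReal.ofReal (p i) • Measure.map (f i) μ) = μ)
    (hinvν : (∑ i, ENNReal.ofReal (p i) • Measure.map (f i) ν) = ν) (x : ℝ) :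
    cdf μ x ≤ cdf ν x := by
  have hμU : ∀ᵐ y ∂μ, y ∈ Ioo (0 : ℝ) 1 := (mem_ae_iff_prob_eq_one measurableSet_Ioo).2 hμ
  have hνU : ∀ᵐ y ∂ν, y ∈ Ioo (0 : ℝ) 1 := (mem_ae_iff_prob_eq_one measurableSet_Ioo).2 hν
  have := nullSingletonClass_of_invariant hmeas hp hp1 hmono hsurj hdown hinvμ hμU
  have := nullSingletonClass_of_invariant hmeas hp hp1 hmono hsurj hdown hinvν hνU
  set h : ℝ → ℝ := fun y => cdf μ y - cdf ν y
  have hmean : ∀ y ∈ Ioo (0 : ℝ) 1, h y = ∑ i, p i * h (invFunOn (f i) (Ioo 0 1) y) := by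
    intro y hy
    simp only [h, mul_sub, Finset.sum_sub_distrib]
    rw [cdf_eq_sum_cdf_invFunOn hmeas (fun i => (hp i).le) hmono hsurj hinvμ hμU hy,
      cdf_eq_sum_cdf_invFunOn hmeas (fun i => (hp i).le) hmono hsurj hinvν hνU hy]
  obtain ⟨s, hs⟩ := isCompact_Icc.exists_isGreatest_isMaxOn (nonempty_Icc.2 zero_le_one)
    ((continuous_cdf μ).sub (continuous_cdf ν)).continuousOn (h := h)
  have hsU : s ∉ Ioo 0 1 := notMem_of_isGreatest_isMaxOn hp hp1 hmean
    (fun i y hy => Ioo_subset_Icc_self ((hsurj i).mapsTo_invFunOn hy))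
    (fun y hy => (hdown y hy).imp fun i => lt_invFunOn_of_lt (hmono i) (hsurj i) hy) hs
  by_cases hx : x ∈ Ioo 0 1
  · have hxs : h x ≤ h s := hs.1.2 (Ioo_subset_Icc_self hx)
    have hs0 : h s = 0 := sub_eq_zero.2 (cdf_eq_cdf_of_notMem_Ioo hμ hν hsU)
    simp only [h] at hxs hs0
    linarith
  · exact (cdf_eq_cdf_of_notMem_Ioo hμ hν hx).le

end UnitInterval

theorem stmt5_general (N : ℕ) (f : Fin N → ℝ → ℝ) (p : Fin N → ℝ)
    (hmeas : ∀ i, Measurable (f i))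
    (hmono : ∀ i, StrictMonoOn (f i) (Icc 0 1))
    (hsurj : ∀ i, SurjOn (f i) (Icc 0 1) (Icc 0 1))
    (h0 : ∀ i, f i 0 = 0) (h1 : ∀ i, f i 1 = 1)
    (hp : ∀ i, 0 < p i) (hp1 : ∑ i, p i = 1)
    (hminmax : ∀ x ∈ Ioo (0:ℝ) 1, (∃ i, f i x < x) ∧ (∃ j, x < f j x))
    (μ₁ μ₂ : Measure ℝ)
    (hprob₁ : IsProbabilityMeasure μ₁) (hprob₂ : IsProbabilityMeasure μ₂)
    (hμ₁01 : μ₁ (Ioo (0:ℝ) 1) = 1) (hμ₂01 : μ₂ (Ioo (0:ℝ) 1) = 1)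
    (hinv₁ : (∑ i, ENNReal.ofReal (p i) • Measure.map (f i) μ₁) = μ₁)
    (hinv₂ : (∑ i, ENNReal.ofReal (p i) • Measure.map (f i) μ₂) = μ₂) :
    μ₁ = μ₂ := by
  have hmono' : ∀ i, StrictMonoOn (f i) (Ioo 0 1) := fun i => (hmono i).mono Ioo_subset_Icc_self
  have hsurj' : ∀ i, SurjOn (f i) (Ioo 0 1) (Ioo 0 1) := fun i =>
    surjOn_Ioo_of_surjOn_Icc (hsurj i) (h0 i) (h1 i)
  have hdown : ∀ x ∈ Ioo (0 : ℝ) 1, ∃ i, f i x < x := fun x hx => (hminmax x hx).1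
  refine Measure.eq_of_cdf μ₁ μ₂ (StieltjesFunction.ext fun x => le_antisymm ?_ ?_)
  · exact cdf_le_cdf_of_invariant hmeas hp hp1 hmono' hsurj' hdown hμ₁01 hμ₂01 hinv₁ hinv₂ x
  · exact cdf_le_cdf_of_invariant hmeas hp hp1 hmono' hsurj' hdown hμ₂01 hμ₁01 hinv₂ hinv₁ x

/-- Uniqueness: the Markov operator of such an iterated function
system has at most one invariant probability measure concentrated on `(0,1)`. -/
theorem stmt5 (N : ℕ) (f : Fin N → ℝ → ℝ) (p : Fin N → ℝ)
    (hmeas : ∀ i, Measurable (f i))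
    (hmono : ∀ i, StrictMonoOn (f i) (Icc 0 1))
    (hmaps : ∀ i, MapsTo (f i) (Icc 0 1) (Icc 0 1))
    (hcont : ∀ i, ContinuousOn (f i) (Icc 0 1))
    (hsurj : ∀ i, SurjOn (f i) (Icc 0 1) (Icc 0 1))
    (h0 : ∀ i, f i 0 = 0) (h1 : ∀ i, f i 1 = 1)
    (hp : ∀ i, 0 < p i) (hp1 : ∑ i, p i = 1)
    (hminmax : ∀ x ∈ Ioo (0:ℝ) 1, (∃ i, f i x < x) ∧ (∃ j, x < f j x))
    (μ₁ μ₂ : Measure ℝ)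
    (hprob₁ : IsProbabilityMeasure μ₁) (hprob₂ : IsProbabilityMeasure μ₂)
    (hμ₁01 : μ₁ (Ioo (0:ℝ) 1) = 1) (hμ₂01 : μ₂ (Ioo (0:ℝ) 1) = 1)
    (hinv₁ : (∑ i, ENNReal.ofReal (p i) • Measure.map (f i) μ₁) = μ₁)
    (hinv₂ : (∑ i, ENNReal.ofReal (p i) • Measure.map (f i) μ₂) = μ₂) :
    μ₁ = μ₂ :=
  stmt5_general N f p hmeas hmono hsurj h0 h1 hp hp1 hminmax μ₁ μ₂ hprob₁ hprob₂ hμ₁01 hμ₂01 hinv₁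
    hinv₂
end

section
/- Let f₁,…,f_N : [0,1] → [0,1] be increasing homeomorphisms fixing 0 and 1 with all pᵢ > 0, such that for every x ∈ (0,1) there are i, j with fᵢ(x) < x < f_j(x). If μ is a P-invariant probability measure with μ((0,1)) = 1, then μ is atomless. -/
/-!
Let `m` be the largest mass of an atom and `a` the leftmost of the finitely many atoms of
mass `m`; it lies in `(0,1)`. Evaluating `μ = ∑ pᵢ fᵢ_* μ` at `{a}` writes `m` as
a convex combination of the masses `μ (fᵢ⁻¹ {a})`, each of which is the mass of at most one
point of `(0,1)` since `fᵢ` is injective there, hence at most `m`. So all of them equal `m`.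
For `j` with `a < fⱼ a` the preimage is a point `c < a` of mass `m`, contradicting the choice
of `a`.
-/

open Set MeasureTheory

theorem eq_of_sum_mul_eq_of_le {ι : Type*} [Fintype ι] {p v : ι → ℝ} {m : ℝ}
    (hp : ∀ i, 0 < p i) (hp1 : ∑ i, p i = 1) (hv : ∀ i, v i ≤ m)
    (h : ∑ i, p i * v i = m) (i : ι) : v i = m := by
  have hsum : ∑ i, p i * v i = ∑ i, p i * m := by rw [h, ← Finset.sum_mul, hp1, one_mul]
  have := (Finset.sum_eq_sum_iff_of_le fun i _ => mul_le_mul_of_nonneg_left (hv i) (hp i).le).1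
    hsum i (Finset.mem_univ i)
  exact mul_left_cancel₀ (hp i).ne' this

section Atoms

variable {α : Type*} [MeasurableSpace α] (μ : Measure α)

section MeasurableSingleton

variable [MeasurableSingletonClass α]

theorem finite_setOf_le_measure_singleton [IsFiniteMeasure μ] {ε : ENNReal} (hε : ε ≠ 0) :
    {x | ε ≤ μ {x}}.Finite :=
  Measure.finite_const_le_meas_of_disjoint_iUnion μ (pos_iff_ne_zero.2 hε) measurableSet_singleton
    (fun _ _ hxy => disjoint_singleton.2 hxy) (measure_ne_top μ _)

theorem exists_forall_measure_singleton_le [IsFiniteMeasure μ] {a₀ : α} (ha₀ : μ {a₀} ≠ 0) :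
    ∃ a, ∀ x, μ {x} ≤ μ {a} := by
  obtain ⟨a, ha₀a, hmax⟩ := exists_max_image _ (fun x => μ {x})
    (finite_setOf_le_measure_singleton μ ha₀) ⟨a₀, le_refl (μ {a₀})⟩
  refine ⟨a, fun x => ?_⟩
  rcases le_or_gt (μ {a₀}) (μ {x}) with hx | hx
  · exact hmax x hx
  · exact hx.le.trans ha₀a

end MeasurableSingleton

variable {μ}

theorem mem_of_measure_singleton_ne_zero {U : Set α} (hU : μ Uᶜ = 0) {x : α} (hx : μ {x} ≠ 0) :
    x ∈ U := by
  by_contra hxU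
  exact hx (measure_mono_null (singleton_subset_iff.2 hxU) hU)

theorem measure_preimage_singleton_eq_zero_or {β : Type*} {g : α → β} {U : Set α}
    (hU : μ Uᶜ = 0) (hg : InjOn g U) (b : β) :
    μ (g ⁻¹' {b}) = 0 ∨ ∃ c ∈ U, g c = b ∧ μ (g ⁻¹' {b}) = μ {c} := by
  have hsub : (g ⁻¹' {b} ∩ U).Subsingleton := fun x hx y hy => hg hx.2 hy.2 (hx.1.trans hy.1.symm)
  rw [← measure_inter_conull hU]
  rcases hsub.eq_empty_or_singleton with h | ⟨c, h⟩
  · exact .inl (by rw [h, measure_empty])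
  · have hc : c ∈ g ⁻¹' {b} ∩ U := h ▸ mem_singleton c
    exact .inr ⟨c, hc.2, hc.1, by rw [h]⟩

theorem measure_preimage_singleton_le {β : Type*} {g : α → β} {U : Set α} (hU : μ Uᶜ = 0)
    (hg : InjOn g U) {m : ENNReal} (hm : ∀ x, μ {x} ≤ m) (b : β) : μ (g ⁻¹' {b}) ≤ m := by
  rcases measure_preimage_singleton_eq_zero_or hU hg b with h | ⟨c, -, -, h⟩
  · exact h ▸ zero_le
  · exact h ▸ hm c

end Atoms

theorem measureReal_eq_sum_mul_measureReal_preimage {α ι : Type*} [MeasurableSpace α]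
    [Fintype ι] {f : ι → α → α} {p : ι → ℝ} (hf : ∀ i, Measurable (f i)) (hp : ∀ i, 0 ≤ p i)
    {μ : Measure α} [IsFiniteMeasure μ] (hinv : ∑ i, ENNReal.ofReal (p i) • μ.map (f i) = μ)
    {s : Set α} (hs : MeasurableSet s) : μ.real s = ∑ i, p i * μ.real (f i ⁻¹' s) := by
  conv_lhs => rw [← hinv]
  simp only [measureReal_def, Measure.finsetSum_apply, Measure.smul_apply,
    Measure.map_apply (hf _) hs, smul_eq_mul]
  rw [ENNReal.toReal_sum fun i _ => ENNReal.mul_ne_top ENNReal.ofReal_ne_top (measure_ne_top μ _)]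
  simp only [ENNReal.toReal_mul, ENNReal.toReal_ofReal (hp _)]

theorem exists_lt_measure_singleton_eq {α ι : Type*} [LinearOrder α] [MeasurableSpace α]
    [MeasurableSingletonClass α] [Fintype ι] {f : ι → α → α} {p : ι → ℝ}
    (hf : ∀ i, Measurable (f i)) {U : Set α} (hmono : ∀ i, StrictMonoOn (f i) U)
    (hp : ∀ i, 0 < p i) (hp1 : ∑ i, p i = 1) {μ : Measure α} [IsFiniteMeasure μ]
    (hU : μ Uᶜ = 0) (hinv : ∑ i, ENNReal.ofReal (p i) • μ.map (f i) = μ)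
    {b : α} (hb : b ∈ U) (hbmax : ∀ x, μ {x} ≤ μ {b}) (hb0 : μ {b} ≠ 0) {j : ι}
    (hj : b < f j b) : ∃ c < b, μ {c} = μ {b} := by
  have hpre : ∀ i, μ (f i ⁻¹' {b}) ≤ μ {b} := fun i =>
    measure_preimage_singleton_le hU (hmono i).injOn hbmax b
  have hreal : μ.real (f j ⁻¹' {b}) = μ.real {b} :=
    eq_of_sum_mul_eq_of_le hp hp1 (fun i => ENNReal.toReal_mono (measure_ne_top μ _) (hpre i))
      (measureReal_eq_sum_mul_measureReal_preimage hf (fun i => (hp i).le) hinv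
        (measurableSet_singleton b)).symm j
  have hj0 : μ (f j ⁻¹' {b}) = μ {b} := (measureReal_eq_measureReal_iff).1 hreal
  rcases measure_preimage_singleton_eq_zero_or hU (hmono j).injOn b with h | ⟨c, hc, hfc, h⟩
  · exact absurd (hj0 ▸ h) hb0
  refine ⟨c, lt_of_not_ge fun hbc => ?_, h ▸ hj0⟩
  exact hj.not_ge (hfc ▸ (hmono j).monotoneOn hb hc hbc)

theorem stmt6_general (N : ℕ) (f : Fin N → ℝ → ℝ) (p : Fin N → ℝ)
    (hmeas : ∀ i, Measurable (f i))
    (hmono : ∀ i, StrictMonoOn (f i) (Icc 0 1))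
    (hp : ∀ i, 0 < p i) (hp1 : ∑ i, p i = 1)
    (hminmax : ∀ x ∈ Ioo (0:ℝ) 1, (∃ i, f i x < x) ∧ (∃ j, x < f j x))
    (μ : Measure ℝ) (hprob : IsProbabilityMeasure μ)
    (hμ01 : μ (Ioo (0:ℝ) 1) = 1)
    (hinv : (∑ i, ENNReal.ofReal (p i) • Measure.map (f i) μ) = μ) :
    ∀ a : ℝ, μ {a} = 0 := by
  intro a₀
  by_contra ha₀
  have hU : μ (Ioo 0 1)ᶜ = 0 := (prob_compl_eq_zero_iff measurableSet_Ioo).2 hμ01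
  obtain ⟨a, hamax⟩ := exists_forall_measure_singleton_le μ ha₀
  have ha0 : μ {a} ≠ 0 := ne_bot_of_le_ne_bot ha₀ (hamax a₀)
  have hfin : {x | μ {x} = μ {a}}.Finite :=
    (finite_setOf_le_measure_singleton μ ha0).subset fun x hx => hx.ge
  obtain ⟨b, hb⟩ := hfin.exists_minimal ⟨a, rfl⟩
  have hba : μ {b} = μ {a} := hb.prop
  have hbU : b ∈ Ioo 0 1 := mem_of_measure_singleton_ne_zero hU (hba ▸ ha0)
  obtain ⟨j, hj⟩ := (hminmax b hbU).2
  obtain ⟨c, hcb, hc⟩ := exists_lt_measure_singleton_eq hmeas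
    (fun i => (hmono i).mono Ioo_subset_Icc_self) hp hp1 hU hinv hbU (hba ▸ hamax) (hba ▸ ha0) hj
  exact hb.not_lt (hc.trans hba) hcb

/-- Any invariant probability measure concentrated on `(0,1)` for
such an iterated function system is atomless. -/
theorem stmt6 (N : ℕ) (f : Fin N → ℝ → ℝ) (p : Fin N → ℝ)
    (hmeas : ∀ i, Measurable (f i))
    (hmono : ∀ i, StrictMonoOn (f i) (Icc 0 1))
    (hmaps : ∀ i, MapsTo (f i) (Icc 0 1) (Icc 0 1))
    (hcont : ∀ i, ContinuousOn (f i) (Icc 0 1))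
    (hsurj : ∀ i, SurjOn (f i) (Icc 0 1) (Icc 0 1))
    (h0 : ∀ i, f i 0 = 0) (h1 : ∀ i, f i 1 = 1)
    (hp : ∀ i, 0 < p i) (hp1 : ∑ i, p i = 1)
    (hminmax : ∀ x ∈ Ioo (0:ℝ) 1, (∃ i, f i x < x) ∧ (∃ j, x < f j x))
    (μ : Measure ℝ) (hprob : IsProbabilityMeasure μ)
    (hμ01 : μ (Ioo (0:ℝ) 1) = 1)
    (hinv : (∑ i, ENNReal.ofReal (p i) • Measure.map (f i) μ) = μ) :
    ∀ a : ℝ, μ {a} = 0 :=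
  stmt6_general N f p hmeas hmono hp hp1 hminmax μ hprob hμ01 hinv
end

section
/- Let P be a Markov operator on probability measures on [0,1] with predual U acting on C([0,1]), and suppose P is asymptotically stable on (0,1): it has a unique invariant measure μ* with μ*((0,1)) = 1 and ⟨Pⁿμ, φ⟩ → ⟨μ*, φ⟩ for every probability measure μ on (0,1) and continuous φ. Suppose moreover Uφ(0) = φ(0) and Uφ(1) = φ(1) for all φ. Then for every f ∈ C([0,1]) and every x ∈ [0,1] the sequence Uⁿf(x) converges: to f(0) if x = 0, to f(1) if x = 1, and to ∫ f dμ* if x ∈ (0,1). Consequently ‖Uⁿf − ∫ f dμ*‖_{L²(μ*)} → 0 for every f ∈ L²(μ*). -/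
/-!
Testing the predual relation against Dirac masses gives `Uⁿf(x) = ∫ f d(Pⁿδₓ)`. For `x ∈ (0,1)`,
`δₓ` is a probability measure on `(0,1)`, so asymptotic stability gives the limit `∫ f dμ*`, while
`0` and `1` are fixed by `U`. Since `|Uⁿf| ≤ ‖f‖` and `μ*` does not charge `{0,1}`, bounded a.e.
convergence gives `Uⁿf → ∫ f dμ*` in `L²(μ*)` for continuous `f`. The iterates of a contraction
are equicontinuous, so the set of `g` along which `U₂ⁿg` converges to the constant `∫ g dμ*` is
closed; it contains the dense subspace `C([0,1])`, hence is all of `L²(μ*)`.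
-/

open MeasureTheory Filter unitInterval Topology ENNReal

theorem isProbabilityMeasure_iterate {X : Type*} [MeasurableSpace X] {P : Measure X → Measure X}
    (hP : ∀ μ, IsProbabilityMeasure μ → IsProbabilityMeasure (P μ))
    (μ : Measure X) [IsProbabilityMeasure μ] (n : ℕ) : IsProbabilityMeasure (P^[n] μ) := by
  induction n with
  | zero => assumption
  | succ n ih => rw [Function.iterate_succ_apply']; exact hP _ ih

section Predual

variable {X : Type*} [TopologicalSpace X] {U : C(X, ℝ) → C(X, ℝ)}

theorem iterate_apply_of_forall_apply_eq {x : X} (h : ∀ φ, U φ x = φ x) (n : ℕ) (φ : C(X, ℝ)) :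
    (U^[n] φ) x = φ x := by
  induction n with
  | zero => rfl
  | succ n ih => rw [Function.iterate_succ_apply', h, ih]

variable [MeasurableSpace X] {P : Measure X → Measure X}

theorem integral_iterate_predual
    (hP : ∀ μ, IsProbabilityMeasure μ → IsProbabilityMeasure (P μ))
    (hdual : ∀ μ, IsProbabilityMeasure μ → ∀ φ : C(X, ℝ), ∫ x, U φ x ∂μ = ∫ x, φ x ∂(P μ))
    (n : ℕ) (μ : Measure X) [IsProbabilityMeasure μ] (φ : C(X, ℝ)) :
    ∫ x, (U^[n] φ) x ∂μ = ∫ x, φ x ∂(P^[n] μ) := by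
  induction n generalizing φ with
  | zero => rfl
  | succ n ih =>
    rw [Function.iterate_succ_apply, ih, Function.iterate_succ_apply']
    exact hdual _ (isProbabilityMeasure_iterate hP μ n) φ

theorem iterate_apply_eq_integral_dirac [OpensMeasurableSpace X]
    (hP : ∀ μ, IsProbabilityMeasure μ → IsProbabilityMeasure (P μ))
    (hdual : ∀ μ, IsProbabilityMeasure μ → ∀ φ : C(X, ℝ), ∫ x, U φ x ∂μ = ∫ x, φ x ∂(P μ))
    (n : ℕ) (φ : C(X, ℝ)) (x : X) :
    (U^[n] φ) x = ∫ y, φ y ∂(P^[n] (Measure.dirac x)) := by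
  rw [← integral_iterate_predual hP hdual,
    integral_dirac' _ _ (U^[n] φ).continuous.stronglyMeasurable]

theorem norm_iterate_apply_le [CompactSpace X] [OpensMeasurableSpace X]
    (hP : ∀ μ, IsProbabilityMeasure μ → IsProbabilityMeasure (P μ))
    (hdual : ∀ μ, IsProbabilityMeasure μ → ∀ φ : C(X, ℝ), ∫ x, U φ x ∂μ = ∫ x, φ x ∂(P μ))
    (n : ℕ) (φ : C(X, ℝ)) (x : X) : ‖(U^[n] φ) x‖ ≤ ‖φ‖ := by
  have := isProbabilityMeasure_iterate hP (Measure.dirac x) n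
  rw [iterate_apply_eq_integral_dirac hP hdual]
  simpa using norm_integral_le_of_norm_le_const (μ := P^[n] (Measure.dirac x))
    (Eventually.of_forall φ.norm_coe_le_norm)

end Predual

theorem unifIntegrable_of_norm_le {ι α β : Type*} [MeasurableSpace α] [NormedAddCommGroup β]
    {μ : Measure α} {p : ℝ≥0∞} (hp : 1 ≤ p) (hp' : p ≠ ∞) {f : ι → α → β}
    (hf : ∀ i, AEStronglyMeasurable (f i) μ) {C : ℝ} (hC : ∀ i x, ‖f i x‖ ≤ C) :
    UnifIntegrable f p μ := by
  refine unifIntegrable_of hp hp' hf fun _ _ => ⟨C.toNNReal + 1, fun i => ?_⟩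
  have hempty : {x | C.toNNReal + 1 ≤ ‖f i x‖₊} = ∅ := by
    refine Set.eq_empty_of_forall_notMem fun x hx => ?_
    have : ‖f i x‖₊ ≤ C.toNNReal := by
      rw [← NNReal.coe_le_coe, coe_nnnorm]; exact (hC i x).trans (le_max_left _ _)
    exact (lt_add_one _).not_ge (hx.trans this)
  simp [hempty]

theorem tendsto_toLp_const_of_tendsto_ae {X : Type*} [TopologicalSpace X] [MeasurableSpace X]
    [BorelSpace X] [CompactSpace X] {μ : Measure X} [IsFiniteMeasure μ] {p : ℝ≥0∞} [Fact (1 ≤ p)]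
    (hp : p ≠ ∞) {f : ℕ → C(X, ℝ)} {C : ℝ} (hC : ∀ n x, ‖f n x‖ ≤ C) {c : ℝ}
    (hlim : ∀ᵐ x ∂μ, Tendsto (fun n => f n x) atTop (𝓝 c)) :
    Tendsto (fun n => ContinuousMap.toLp p μ ℝ (f n)) atTop (𝓝 (Lp.const p μ c)) := by
  have hmeas n : AEStronglyMeasurable (f n) μ := (f n).continuous.aestronglyMeasurable
  rw [← MemLp.toLp_const, Lp.tendsto_Lp_iff_tendsto_eLpNorm]
  have hcongr n : eLpNorm (⇑(ContinuousMap.toLp p μ ℝ (f n)) - fun _ => c) p μ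
      = eLpNorm (⇑(f n) - fun _ => c) p μ :=
    eLpNorm_congr_ae ((ContinuousMap.coeFn_toLp (𝕜 := ℝ) μ (f n)).sub EventuallyEq.rfl)
  simp only [hcongr]
  exact tendsto_Lp_finite_of_tendsto_ae Fact.out hp hmeas (memLp_const c)
    (unifIntegrable_of_norm_le Fact.out hp hmeas hC) hlim

theorem continuous_integral_L2 {α : Type*} [MeasurableSpace α] {μ : Measure α}
    [IsFiniteMeasure μ] : Continuous fun f : Lp ℝ 2 μ => ∫ x, f x ∂μ := by
  have h (f : Lp ℝ 2 μ) : ∫ x, f x ∂μ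
      = inner ℝ (indicatorConstLp 2 MeasurableSet.univ (measure_ne_top μ _) (1 : ℝ)) f := by
    rw [L2.inner_indicatorConstLp_one, setIntegral_univ]
  simp only [h]
  exact continuous_const.inner continuous_id

theorem tendsto_iterate_of_denseRange {X ι : Type*} [PseudoMetricSpace X] {T : X → X}
    (hT : LipschitzWith 1 T) {L : X → X} (hL : Continuous L) {e : ι → X} (he : DenseRange e)
    (h : ∀ i, Tendsto (fun n => T^[n] (e i)) atTop (𝓝 (L (e i)))) (x : X) :
    Tendsto (fun n => T^[n] x) atTop (𝓝 (L x)) := by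
  have hequi : Equicontinuous fun n => T^[n] :=
    (LipschitzWith.uniformEquicontinuous _ 1 fun n => by simpa using hT.iterate n).equicontinuous
  exact he.induction_on x (hequi.isClosed_setOfPred_tendsto hL) h

theorem tendsto_iterate_apply_unitInterval {P : Measure I → Measure I} {U : C(I, ℝ) → C(I, ℝ)}
    (hP : ∀ μ, IsProbabilityMeasure μ → IsProbabilityMeasure (P μ))
    (hdual : ∀ μ, IsProbabilityMeasure μ → ∀ φ : C(I, ℝ), ∫ x, U φ x ∂μ = ∫ x, φ x ∂(P μ))
    {μstar : Measure I}
    (hstable : ∀ μ : Measure I, IsProbabilityMeasure μ → μ {(0 : I), 1} = 0 →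
      ∀ φ : C(I, ℝ), Tendsto (fun n => ∫ x, φ x ∂(P^[n] μ)) atTop (𝓝 (∫ x, φ x ∂μstar)))
    (hU0 : ∀ φ : C(I, ℝ), U φ 0 = φ 0) (hU1 : ∀ φ : C(I, ℝ), U φ 1 = φ 1)
    (f : C(I, ℝ)) (x : I) :
    Tendsto (fun n => (U^[n] f) x) atTop
      (𝓝 (if x = 0 then f 0 else if x = 1 then f 1 else ∫ y, f y ∂μstar)) := by
  split_ifs with h0 h1
  · subst h0
    simp only [iterate_apply_of_forall_apply_eq hU0, tendsto_const_nhds]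
  · subst h1
    simp only [iterate_apply_of_forall_apply_eq hU1, tendsto_const_nhds]
  · have hdirac : Measure.dirac x {(0 : I), 1} = 0 := by simp [h0, h1]
    simpa only [iterate_apply_eq_integral_dirac hP hdual] using
      hstable _ inferInstance hdirac f

theorem stmt10_general
    (P : Measure I → Measure I)
    (hPprob : ∀ μ : Measure I, IsProbabilityMeasure μ → IsProbabilityMeasure (P μ))
    (U : C(I, ℝ) → C(I, ℝ))
    (hdual : ∀ (μ : Measure I), IsProbabilityMeasure μ → ∀ φ : C(I, ℝ),
      ∫ x, U φ x ∂μ = ∫ x, φ x ∂(P μ))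
    (μstar : Measure I) (hstarprob : IsProbabilityMeasure μstar)
    (hstar01 : μstar {(0 : I), 1} = 0)
    (hstable : ∀ μ : Measure I, IsProbabilityMeasure μ → μ {(0 : I), 1} = 0 →
      ∀ φ : C(I, ℝ),
        Tendsto (fun n => ∫ x, φ x ∂(P^[n] μ)) atTop (nhds (∫ x, φ x ∂μstar)))
    (hU0 : ∀ φ : C(I, ℝ), U φ 0 = φ 0) (hU1 : ∀ φ : C(I, ℝ), U φ 1 = φ 1) :
    (∀ f : C(I, ℝ), ∀ x : I,
      Tendsto (fun n => (U^[n] f) x) atTop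
        (nhds (if x = 0 then f 0 else if x = 1 then f 1 else ∫ y, f y ∂μstar))) ∧
    (∀ U₂ : Lp ℝ 2 μstar →L[ℝ] Lp ℝ 2 μstar, ‖U₂‖ ≤ 1 →
      (∀ φ : C(I, ℝ), U₂ (ContinuousMap.toLp 2 μstar ℝ φ) = ContinuousMap.toLp 2 μstar ℝ (U φ)) →
      ∀ g : Lp ℝ 2 μstar,
        Tendsto (fun n => ‖U₂^[n] g - Lp.const 2 μstar (∫ x, g x ∂μstar)‖)
          atTop (nhds 0)) := by
  have hpointwise := tendsto_iterate_apply_unitInterval hPprob hdual hstable hU0 hU1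
  refine ⟨hpointwise, fun U₂ hU₂ hcomm g => ?_⟩
  have htendsto_toLp (φ : C(I, ℝ)) : Tendsto (fun n => U₂^[n] (ContinuousMap.toLp 2 μstar ℝ φ))
      atTop (𝓝 (Lp.const 2 μstar (∫ x, ContinuousMap.toLp 2 μstar ℝ φ x ∂μstar))) := by
    have hsemiconj : Function.Semiconj (ContinuousMap.toLp 2 μstar ℝ) U U₂ :=
      fun φ => (hcomm φ).symm
    simp only [← (hsemiconj.iterate_right _) φ,
      integral_congr_ae (ContinuousMap.coeFn_toLp (𝕜 := ℝ) μstar φ)]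
    refine tendsto_toLp_const_of_tendsto_ae ENNReal.ofNat_ne_top
      (norm_iterate_apply_le hPprob hdual · φ) ?_
    filter_upwards [measure_eq_zero_iff_ae_notMem.mp hstar01] with x hx
    obtain ⟨hx0, hx1⟩ : x ≠ 0 ∧ x ≠ 1 := by simpa [not_or] using hx
    simpa [hx0, hx1] using hpointwise φ x
  exact tendsto_iff_norm_sub_tendsto_zero.mp <|
    tendsto_iterate_of_denseRange (U₂.lipschitz.weaken hU₂)
      ((Lp.constL 2 μstar ℝ).continuous.comp continuous_integral_L2)
      (ContinuousMap.toLp_denseRange (𝕜 := ℝ) (E := ℝ) (μ := μstar) ENNReal.ofNat_ne_top)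
      htendsto_toLp g

/-- For a Markov operator `P` on probability measures on `[0,1]`
with predual `U` on `C([0,1])`, asymptotically stable on `(0,1)` with invariant
measure `μ*` and satisfying `Uφ(0) = φ(0)`, `Uφ(1) = φ(1)`: for every continuous `f`
the sequence `Uⁿf(x)` converges pointwise (to `f 0` at `0`, `f 1` at `1`, `∫ f dμ*`
inside), and consequently any `L²(μ*)`-contraction `U₂` extending `U` satisfies
`‖U₂ⁿ g − ∫ g dμ*‖_{L²(μ*)} → 0` for every `g ∈ L²(μ*)`. -/
theorem stmt10
    (P : Measure I → Measure I)
    (hPprob : ∀ μ : Measure I, IsProbabilityMeasure μ → IsProbabilityMeasure (P μ))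
    (U : C(I, ℝ) → C(I, ℝ))
    (hdual : ∀ (μ : Measure I), IsProbabilityMeasure μ → ∀ φ : C(I, ℝ),
      ∫ x, U φ x ∂μ = ∫ x, φ x ∂(P μ))
    (μstar : Measure I) (hstarprob : IsProbabilityMeasure μstar)
    (hstar01 : μstar {(0 : I), 1} = 0) (hstarinv : P μstar = μstar)
    (hstable : ∀ μ : Measure I, IsProbabilityMeasure μ → μ {(0 : I), 1} = 0 →
      ∀ φ : C(I, ℝ),
        Tendsto (fun n => ∫ x, φ x ∂(P^[n] μ)) atTop (nhds (∫ x, φ x ∂μstar)))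
    (hU0 : ∀ φ : C(I, ℝ), U φ 0 = φ 0) (hU1 : ∀ φ : C(I, ℝ), U φ 1 = φ 1) :
    (∀ f : C(I, ℝ), ∀ x : I,
      Tendsto (fun n => (U^[n] f) x) atTop
        (nhds (if x = 0 then f 0 else if x = 1 then f 1 else ∫ y, f y ∂μstar))) ∧
    (∀ U₂ : Lp ℝ 2 μstar →L[ℝ] Lp ℝ 2 μstar, ‖U₂‖ ≤ 1 →
      (∀ φ : C(I, ℝ), U₂ (ContinuousMap.toLp 2 μstar ℝ φ) = ContinuousMap.toLp 2 μstar ℝ (U φ)) →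
      ∀ g : Lp ℝ 2 μstar,
        Tendsto (fun n => ‖U₂^[n] g - Lp.const 2 μstar (∫ x, g x ∂μstar)‖)
          atTop (nhds 0)) :=
  stmt10_general P hPprob U hdual μstar hstarprob hstar01 hstable hU0 hU1
end

section
/- Let Σ_n = {1,…,N}ⁿ with product measure ℙ_n from a probability vector (p₁,…,p_N), and let 𝒜 ⊆ Σ = {1,…,N}^ℕ be a measurable set with ℙ(𝒜) ≥ β > 0. For k < n there exists a set A ⊆ Σ_n with ℙ_n(Σ_n \ A) ≤ (1−β)^k such that every i ∈ A can be written as a concatenation i = i₁i₂⋯i_k of finite words (some possibly empty) with the property that for each j = 1,…,k, at least one of the shifted words i_j, σi_j, …, σ^{k−1}i_j is a prefix of some element of 𝒜. -/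
open Set MeasureTheory
open scoped ENNReal

/-- A finite word is dominated by `A ⊆ {1,…,N}^ℕ` if it is empty or is a prefix of
some element of `A`. -/
def Dominated {N : ℕ} (A : Set (ℕ → Fin N)) (w : List (Fin N)) : Prop :=
  w = [] ∨ ∃ j ∈ A, ∀ t : Fin w.length, w.get t = j (t : ℕ)

/-!
Call a word *minimal undominated* if it is not dominated but becomes dominated once its last
letter is deleted. These words form a prefix antichain, so their cylinders in `Σ` are disjoint
and avoid `𝒜`; their total mass is therefore at most `ℙ(𝒜ᶜ) ≤ 1 - β`. By a union bound, the
words of length `n` that begin with a concatenation of `k` minimal undominated words have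
`ℙ_n`-mass at most `(1 - β)^k`. Any other word is cut greedily into minimal undominated blocks
followed by a dominated rest; moving the last letter of each block to the front of the next
one makes the first block dominated and every later block dominated after one shift.
-/

section Words

variable {α : Type*}

def IsMinimalNonMember (D : Set (List α)) (w : List α) : Prop :=
  w ∉ D ∧ w.dropLast ∈ D

def BeginsWithConcat (W : Set (List α)) (k : ℕ) (u : List α) : Prop :=
  ∃ g : Fin k → List α, (∀ t, g t ∈ W) ∧ (List.ofFn g).flatten <+: u

variable {D W : Set (List α)} {k : ℕ} {u w r : List α}

lemma beginsWithConcat_zero : BeginsWithConcat W 0 u :=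
  ⟨Fin.elim0, fun t => t.elim0, by simp⟩

lemma BeginsWithConcat.cons (hw : w ∈ W) (h : BeginsWithConcat W k r) :
    BeginsWithConcat W (k + 1) (w ++ r) := by
  obtain ⟨g, hg, hpre⟩ := h
  refine ⟨Fin.cons w g, Fin.cases hw hg, ?_⟩
  simpa only [List.ofFn_cons, List.flatten_cons, List.prefix_append_right_inj] using hpre

lemma IsMinimalNonMember.ne_nil (hnil : [] ∈ D) (hw : IsMinimalNonMember D w) : w ≠ [] := by
  rintro rfl
  exact hw.1 hnil

lemma exists_isMinimalNonMember_prefix (hnil : [] ∈ D) (hu : u ∉ D) :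
    ∃ w r, IsMinimalNonMember D w ∧ u = w ++ r := by
  induction u using List.reverseRecOn with
  | nil => exact absurd hnil hu
  | append_singleton u a ih =>
    by_cases hu' : u ∈ D
    · exact ⟨u ++ [a], [], ⟨hu, by simpa using hu'⟩, by simp⟩
    · obtain ⟨w, r, hw, rfl⟩ := ih hu'
      exact ⟨w, r ++ [a], hw, by simp⟩

lemma List.IsPrefix.prefix_dropLast_of_ne {v : List α} (h : w <+: v) (hne : w ≠ v) :
    w <+: v.dropLast := by
  obtain ⟨s, rfl⟩ := h
  have hs : s ≠ [] := by
    rintro rfl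
    simp at hne
  rw [List.dropLast_append_of_ne_nil hs]
  exact List.prefix_append _ _

lemma isAntichain_isMinimalNonMember (hD : ∀ ⦃u v⦄, u <+: v → v ∈ D → u ∈ D) :
    IsAntichain (· <+: ·) {w | IsMinimalNonMember D w} :=
  fun _ hw _ hv hne hpre => hw.1 (hD (hpre.prefix_dropLast_of_ne hne) hv.2)

theorem exists_blocks_of_not_beginsWithConcat (hnil : [] ∈ D)
    (hu : ¬ BeginsWithConcat {w | IsMinimalNonMember D w} (k + 1) u) :
    ∃ w₀ ws, ws.length = k ∧ (w₀ :: ws).flatten = u ∧ w₀ ∈ D ∧ ∀ w ∈ ws, w.drop 1 ∈ D := by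
  induction k generalizing u with
  | zero =>
    refine ⟨u, [], rfl, by simp, ?_, by simp⟩
    by_contra hu'
    obtain ⟨w, r, hw, rfl⟩ := exists_isMinimalNonMember_prefix hnil hu'
    exact hu (beginsWithConcat_zero.cons hw)
  | succ k ih =>
    by_cases hu' : u ∈ D
    · exact ⟨u, List.replicate (k + 1) [], by simp, by simp, hu', by simp [hnil]⟩
    obtain ⟨w, r, hw, rfl⟩ := exists_isMinimalNonMember_prefix hnil hu'
    obtain ⟨b, bs, hlen, hr, hb, hbs⟩ := ih fun h => hu (h.cons hw)
    -- the last letter of the minimal block `w` moves to the front of the next block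
    refine ⟨w.dropLast, (w.getLast (hw.ne_nil hnil) :: b) :: bs, by simp [hlen], ?_, hw.2, ?_⟩
    · conv_rhs => rw [← hr, ← List.dropLast_append_getLast (hw.ne_nil hnil)]
      simp
    · simp only [List.mem_cons, forall_eq_or_imp, List.drop_succ_cons, List.drop_zero]
      exact ⟨hb, hbs⟩

end Words

lemma ENNReal.tsum_fin_pi_prod_eq_pow {β : Type*} (f : β → ℝ≥0∞) :
    ∀ k : ℕ, ∑' g : Fin k → β, ∏ i, f (g i) = (∑' b, f b) ^ k
  | 0 => by simp
  | k + 1 => by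
    rw [← (Fin.consEquiv fun _ => β).tsum_eq, ENNReal.tsum_prod']
    simp only [Fin.consEquiv_apply, Fin.prod_univ_succ, Fin.cons_zero, Fin.cons_succ,
      ENNReal.tsum_mul_left, ENNReal.tsum_mul_right, ENNReal.tsum_fin_pi_prod_eq_pow f k, pow_succ']

lemma ENNReal.one_sub_ofReal_pow_le {β : ℝ} (hβ : β ≤ 1) (k : ℕ) :
    (1 - ENNReal.ofReal β) ^ k ≤ ENNReal.ofReal ((1 - β) ^ k) := by
  rw [ENNReal.ofReal_pow (sub_nonneg.2 hβ)]
  gcongr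
  rw [tsub_le_iff_right]
  calc 1 = ENNReal.ofReal (1 - β + β) := by simp
    _ ≤ ENNReal.ofReal (1 - β) + ENNReal.ofReal β := ENNReal.ofReal_add_le

section Cylinders

variable {α : Type*}

def wordCylinder (w : List α) : Set (ℕ → α) := {ω | ∀ t : Fin w.length, w.get t = ω t}

lemma mem_wordCylinder_of_prefix {n : ℕ} {w : List α} {ω : ℕ → α}
    (h : w <+: List.ofFn fun t : Fin n => ω t) : ω ∈ wordCylinder w := by
  obtain ⟨_, hget⟩ := List.prefix_iff_getElem.1 h
  intro t
  simpa using hget t t.isLt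

lemma prefix_or_prefix_of_mem_wordCylinder {v w : List α} {ω : ℕ → α} (hv : ω ∈ wordCylinder v)
    (hw : ω ∈ wordCylinder w) : v <+: w ∨ w <+: v := by
  wlog hle : v.length ≤ w.length generalizing v w
  · exact (this hw hv (le_of_not_ge hle)).symm
  refine .inl (List.prefix_iff_getElem.2 ⟨hle, fun t ht => ?_⟩)
  exact (hv ⟨t, ht⟩).trans (hw ⟨t, ht.trans_le hle⟩).symm

lemma wordCylinder_eq_preimage (w : List α) :
    wordCylinder w = (fun ω (t : Fin w.length) => ω t) ⁻¹' {w.get} := by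
  ext ω
  simp [wordCylinder, funext_iff, eq_comm]

variable [MeasurableSpace α]

noncomputable def wordMass (ν : Measure α) (w : List α) : ℝ≥0∞ :=
  (w.map fun a => ν {a}).prod

lemma wordMass_append (ν : Measure α) (v w : List α) :
    wordMass ν (v ++ w) = wordMass ν v * wordMass ν w := by
  simp [wordMass]

lemma wordMass_flatten_ofFn (ν : Measure α) {k : ℕ} (g : Fin k → List α) :
    wordMass ν (List.ofFn g).flatten = ∏ t, wordMass ν (g t) := by
  induction k with
  | zero => simp [wordMass]
  | succ k ih =>
    simp only [List.ofFn_succ, List.flatten_cons, wordMass_append, ih, Fin.prod_univ_succ]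

variable [Countable α] [MeasurableSingletonClass α] {ν : Measure α} {ℙ : Measure (ℕ → α)}

lemma measure_preimage_restrict
    (hℙ : ∀ m : ℕ, ℙ.map (fun ω (t : Fin m) => ω t) = Measure.pi fun _ => ν)
    {m : ℕ} (S : Set (Fin m → α)) :
    ℙ ((fun ω (t : Fin m) => ω t) ⁻¹' S) = Measure.pi (fun _ => ν) S := by
  rw [← hℙ m, Measure.map_apply (by fun_prop) S.to_countable.measurableSet]

lemma measurableSet_wordCylinder (w : List α) : MeasurableSet (wordCylinder w) := by
  rw [wordCylinder_eq_preimage]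
  exact (Set.to_countable _).measurableSet.preimage (by fun_prop)

lemma measure_wordCylinder [SigmaFinite ν]
    (hℙ : ∀ m : ℕ, ℙ.map (fun ω (t : Fin m) => ω t) = Measure.pi fun _ => ν) (w : List α) :
    ℙ (wordCylinder w) = wordMass ν w := by
  rw [wordCylinder_eq_preimage, measure_preimage_restrict hℙ, Measure.pi_singleton, wordMass,
    ← List.prod_ofFn]
  conv_rhs => rw [← List.ofFn_get w, List.map_ofFn]
  rfl

lemma tsum_wordMass_eq_measure_iUnion [SigmaFinite ν]
    (hℙ : ∀ m : ℕ, ℙ.map (fun ω (t : Fin m) => ω t) = Measure.pi fun _ => ν)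
    {W : Set (List α)} (hW : IsAntichain (· <+: ·) W) :
    ∑' w : W, wordMass ν w = ℙ (⋃ w : W, wordCylinder w) := by
  have hdisj : Pairwise (Function.onFun Disjoint fun w : W => wordCylinder (w : List α)) := by
    intro v w hvw
    refine Set.disjoint_left.2 fun ω hv hw => ?_
    rcases prefix_or_prefix_of_mem_wordCylinder hv hw with h | h
    · exact hW v.2 w.2 (Subtype.coe_ne_coe.2 hvw) h
    · exact hW w.2 v.2 (Subtype.coe_ne_coe.2 hvw.symm) h
  rw [measure_iUnion hdisj fun w => measurableSet_wordCylinder w.1]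
  exact tsum_congr fun w => (measure_wordCylinder hℙ w).symm

lemma measure_beginsWithConcat_le [SigmaFinite ν]
    (hℙ : ∀ m : ℕ, ℙ.map (fun ω (t : Fin m) => ω t) = Measure.pi fun _ => ν)
    (W : Set (List α)) (k n : ℕ) :
    Measure.pi (fun _ : Fin n => ν) {i | BeginsWithConcat W k (List.ofFn i)}
      ≤ (∑' w : W, wordMass ν w) ^ k := by
  rw [← measure_preimage_restrict hℙ]
  calc ℙ _ ≤ ℙ (⋃ g : Fin k → W, wordCylinder (List.ofFn fun t => (g t : List α)).flatten) := by
        refine measure_mono fun ω ⟨g, hg, hpre⟩ => mem_iUnion.2 ⟨fun t => ⟨g t, hg t⟩, ?_⟩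
        exact mem_wordCylinder_of_prefix hpre
    _ ≤ ∑' g : Fin k → W, ℙ (wordCylinder (List.ofFn fun t => (g t : List α)).flatten) :=
        measure_iUnion_le _
    _ = ∑' g : Fin k → W, ∏ t, wordMass ν (g t) := by
        simp only [measure_wordCylinder hℙ, wordMass_flatten_ofFn]
    _ = (∑' w : W, wordMass ν w) ^ k :=
        ENNReal.tsum_fin_pi_prod_eq_pow (fun w : W => wordMass ν w) k

end Cylinders

section Dominated

variable {N : ℕ} {𝒜 : Set (ℕ → Fin N)}

lemma dominated_nil : Dominated 𝒜 [] := .inl rfl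

lemma Dominated.of_prefix {u v : List (Fin N)} (h : u <+: v) (hv : Dominated 𝒜 v) :
    Dominated 𝒜 u := by
  rcases hv with rfl | ⟨ω, hω, hv⟩
  · exact .inl (List.prefix_nil.1 h)
  exact .inr ⟨ω, hω, fun t => by
    simpa [List.get_eq_getElem, h.getElem] using hv ⟨t, t.isLt.trans_le h.length_le⟩⟩

lemma tsum_wordMass_minimal_undominated_le {ν : Measure (Fin N)} [SigmaFinite ν]
    {ℙ : Measure (ℕ → Fin N)}
    (hℙ : ∀ m : ℕ, ℙ.map (fun ω (t : Fin m) => ω t) = Measure.pi fun _ => ν) :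
    ∑' w : {w | IsMinimalNonMember {w | Dominated 𝒜 w} w}, wordMass ν w ≤ ℙ 𝒜ᶜ := by
  rw [tsum_wordMass_eq_measure_iUnion hℙ
    (isAntichain_isMinimalNonMember (D := {w | Dominated 𝒜 w}) fun _ _ => Dominated.of_prefix)]
  exact measure_mono (iUnion_subset fun w ω hω h𝒜 => w.2.1 (.inr ⟨ω, h𝒜, hω⟩))

end Dominated

theorem stmt11_general (N : ℕ) (p : Fin N → ℝ)
    (ℙ : Measure (ℕ → Fin N)) (hPprob : IsProbabilityMeasure ℙ)
    (hcyl : ∀ m : ℕ, ℙ.map (fun ω (k : Fin m) => ω k)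
      = Measure.pi (fun _ : Fin m => ∑ j, ENNReal.ofReal (p j) • Measure.dirac j))
    (𝒜 : Set (ℕ → Fin N)) (h𝒜 : MeasurableSet 𝒜)
    (β : ℝ) (hβ𝒜 : ENNReal.ofReal β ≤ ℙ 𝒜)
    (k n : ℕ) :
    ∃ A : Set (Fin n → Fin N),
      (Measure.pi fun _ : Fin n => ∑ j, ENNReal.ofReal (p j) • Measure.dirac j) Aᶜ
          ≤ ENNReal.ofReal ((1 - β) ^ k) ∧
      ∀ i ∈ A, ∃ ws : List (List (Fin N)),
        ws.length = k ∧ ws.flatten = List.ofFn i ∧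
        ∀ w ∈ ws, ∃ t < k, Dominated 𝒜 (w.drop t) := by
  set ν := ∑ j, ENNReal.ofReal (p j) • Measure.dirac j
  set W := {w | IsMinimalNonMember {w | Dominated 𝒜 w} w}
  refine ⟨{i | ¬ BeginsWithConcat W k (List.ofFn i)}, ?_, fun i hi => ?_⟩
  · have : IsFiniteMeasure ν := ⟨by simp [ν]⟩
    have hβ1 : β ≤ 1 := ENNReal.ofReal_le_one.1 (hβ𝒜.trans prob_le_one)
    simp only [compl_ofPred, not_not]
    calc _ ≤ (∑' w : W, wordMass ν w) ^ k := measure_beginsWithConcat_le hcyl W k n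
      _ ≤ (1 - ENNReal.ofReal β) ^ k := by
          gcongr
          calc _ ≤ ℙ 𝒜ᶜ := tsum_wordMass_minimal_undominated_le hcyl
            _ = 1 - ℙ 𝒜 := prob_compl_eq_one_sub h𝒜
            _ ≤ 1 - ENNReal.ofReal β := tsub_le_tsub_left hβ𝒜 1
      _ ≤ ENNReal.ofReal ((1 - β) ^ k) := ENNReal.one_sub_ofReal_pow_le hβ1 k
  · obtain _ | k := k
    · exact absurd beginsWithConcat_zero hi
    obtain ⟨w₀, ws, hlen, hflat, hw₀, hws⟩ :=
      exists_blocks_of_not_beginsWithConcat dominated_nil hi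
    refine ⟨w₀ :: ws, by simp [hlen], hflat, ?_⟩
    rintro w (_ | ⟨_, hw⟩)
    · exact ⟨0, k.succ_pos, hw₀⟩
    · exact ⟨1, by have := List.length_pos_of_mem hw; omega, hws w hw⟩

/-- If `ℙ(𝒜) ≥ β > 0` then, up to a set of `ℙ_n`-measure at most
`(1-β)^k`, every word of length `n` splits into `k` blocks each of which has one of its
first `k` shifts dominated by `𝒜`. -/
theorem stmt11 (N : ℕ) (p : Fin N → ℝ)
    (hp : ∀ i, 0 < p i) (hp1 : ∑ i, p i = 1)
    (ℙ : Measure (ℕ → Fin N)) (hPprob : IsProbabilityMeasure ℙ)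
    (hcyl : ∀ m : ℕ, ℙ.map (fun ω (k : Fin m) => ω k)
      = Measure.pi (fun _ : Fin m => ∑ j, ENNReal.ofReal (p j) • Measure.dirac j))
    (𝒜 : Set (ℕ → Fin N)) (h𝒜 : MeasurableSet 𝒜)
    (β : ℝ) (hβ : 0 < β) (hβ𝒜 : ENNReal.ofReal β ≤ ℙ 𝒜)
    (k n : ℕ) (hkn : k < n) :
    ∃ A : Set (Fin n → Fin N),
      (Measure.pi fun _ : Fin n => ∑ j, ENNReal.ofReal (p j) • Measure.dirac j) Aᶜ
          ≤ ENNReal.ofReal ((1 - β) ^ k) ∧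
      ∀ i ∈ A, ∃ ws : List (List (Fin N)),
        ws.length = k ∧ ws.flatten = List.ofFn i ∧
        ∀ w ∈ ws, ∃ t < k, Dominated 𝒜 (w.drop t) :=
  stmt11_general N p ℙ hPprob hcyl 𝒜 h𝒜 β hβ𝒜 k n
end

section
/- Let (f₁,…,f_N; p₁,…,p_N) be an admissible iterated function system on [0,1] with Markov operator P and constants ε ∈ (0,1/2), α, δ ∈ (0,1), M = ε^{-α} such that P preserves P⁻_{M,α} and ℙ(∩_{j=1}^{⌊n^{1/4}⌋} A_{x,j}(ε)) ≤ γ_n for x ∈ [ε_n, ε], where ε_n = (1−δ)^{⌊n^{1/4}⌋/2} and γ_n = (1−δ)^{α⌊n^{1/4}⌋/2}. Then for all n and all k ≥ ⌊n^{1/4}⌋ and x ∈ [ε_n, 1]: ℙ({ i ∈ Σ : f_i^k(x) < ε_n }) ≤ 2M γ_n. -/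
open Set MeasureTheory Finset Filter

structure AdmissibleIFS (N : ℕ) (f : Fin N → ℝ → ℝ) (p d e : Fin N → ℝ) : Prop where
  meas : ∀ i, Measurable (f i)
  mono : ∀ i, StrictMonoOn (f i) (Icc 0 1)
  maps : ∀ i, MapsTo (f i) (Icc 0 1) (Icc 0 1)
  cont : ∀ i, ContinuousOn (f i) (Icc 0 1)
  surj : ∀ i, SurjOn (f i) (Icc 0 1) (Icc 0 1)
  fix0 : ∀ i, f i 0 = 0
  fix1 : ∀ i, f i 1 = 1
  ppos : ∀ i, 0 < p i
  psum : ∑ i, p i = 1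
  c1 : ∀ i, ∃ η > (0:ℝ), ContDiffOn ℝ 1 (f i) (Icc 0 η) ∧ ContDiffOn ℝ 1 (f i) (Icc (1 - η) 1)
  deriv0 : ∀ i, HasDerivWithinAt (f i) (d i) (Icc 0 1) 0
  deriv1 : ∀ i, HasDerivWithinAt (f i) (e i) (Icc 0 1) 1
  dpos : ∀ i, 0 < d i
  epos : ∀ i, 0 < e i
  lyap0 : 0 < ∑ i, p i * Real.log (d i)
  lyap1 : 0 < ∑ i, p i * Real.log (e i)
  interior : ∀ x ∈ Ioo (0:ℝ) 1, (∃ i, f i x < x) ∧ (∃ j, x < f j x)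

/-- Iterates along a sequence of indices: `wordIter f ω n = f_{ω (n-1)} ∘ ⋯ ∘ f_{ω 0}`. -/
def wordIter {N : ℕ} (f : Fin N → ℝ → ℝ) (ω : ℕ → Fin N) : ℕ → ℝ → ℝ
  | 0 => id
  | n + 1 => f (ω n) ∘ wordIter f ω n

noncomputable def nroot4 (n : ℕ) : ℕ := ⌊(n : ℝ) ^ ((1 : ℝ) / 4)⌋₊

/-!
Write `ε_n = (1-δ)^{⌊n^{1/4}⌋/2}`, so that `γ_n = ε_n^α`. From a starting point `y ≥ ε` the law
of `f_i^r(y)` is `P^r δ_y`, and `δ_y ∈ P⁻_{M,α}` because `M y^α ≥ M ε^α = 1`; as `P` preserves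
the class, `ℙ(f_i^r(y) < ε_n) ≤ M ε_n^α = M γ_n`. For a general `x ≥ ε_n`, split according to the
first time `j ≤ ⌊n^{1/4}⌋` at which the orbit of `x` enters `[ε, 1]`. If there is none, the word lies
in every `A_{x,j}(ε)`, an event of probability at most `γ_n`. Otherwise the Markov property at
time `j` bounds the remaining probability by `ℙ(first entrance at j) · M γ_n`, and the first-entrance
events are disjoint. Altogether `ℙ(f_i^k(x) < ε_n) ≤ γ_n + M γ_n ≤ 2 M γ_n`.
-/

open scoped ENNReal

section FirstPassage

variable {Ω : Type*} [MeasurableSpace Ω]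

theorem measure_le_add_of_disjointed (μ : Measure Ω) [IsProbabilityMeasure μ] {s : ℕ → Set Ω}
    (hs : ∀ j, MeasurableSet (s j)) (B : Set Ω) (m : ℕ) {a b : ℝ≥0∞}
    (hstay : μ (⋂ j ∈ Finset.Iic m, (s j)ᶜ) ≤ a)
    (hpass : ∀ j ≤ m, μ (disjointed s j ∩ B) ≤ μ (disjointed s j) * b) :
    μ B ≤ a + b := by
  have hcover : B ⊆ (⋂ j ∈ Finset.Iic m, (s j)ᶜ) ∪ ⋃ j ∈ Finset.Iic m, disjointed s j ∩ B := by
    intro ω hω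
    by_cases hstays : ω ∈ ⋂ j ∈ Finset.Iic m, (s j)ᶜ
    · exact Or.inl hstays
    · have : ω ∈ ⋃ j ∈ Finset.Iic m, disjointed s j := by
        rw [biUnion_Iic_disjointed, partialSups_eq_biSup]
        simpa using hstays
      obtain ⟨j, hj, hωj⟩ := mem_iUnion₂.mp this
      exact Or.inr (mem_iUnion₂.mpr ⟨j, hj, hωj, hω⟩)
  have hunion : ∑ j ∈ Finset.Iic m, μ (disjointed s j) ≤ 1 := by
    rw [← measure_biUnion_finset (fun i _ j _ hij => disjoint_disjointed s hij)
      (fun j _ => MeasurableSet.disjointed hs j)]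
    exact prob_le_one
  calc μ B ≤ μ (⋂ j ∈ Finset.Iic m, (s j)ᶜ) + ∑ j ∈ Finset.Iic m, μ (disjointed s j ∩ B) :=
        (measure_mono hcover).trans
          ((measure_union_le _ _).trans (by gcongr; exact measure_biUnion_finset_le _ _))
    _ ≤ a + ∑ j ∈ Finset.Iic m, μ (disjointed s j) * b :=
        add_le_add hstay (Finset.sum_le_sum fun j hj => hpass j (Finset.mem_Iic.mp hj))
    _ ≤ a + b := by
        rw [← Finset.sum_mul]
        gcongr
        exact mul_le_of_le_one_left' hunion

theorem dependsOn_mem_disjointed {α : Type*} {s : ℕ → Set (ℕ → α)}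
    (hs : ∀ i, DependsOn (· ∈ s i) (Set.Iio i)) (j : ℕ) :
    DependsOn (· ∈ disjointed s j) (Set.Iio j) := by
  intro ω ω' h
  have key : ∀ i ≤ j, (ω ∈ s i ↔ ω' ∈ s i) := fun i hi =>
    Iff.of_eq (hs i fun t ht => h t (lt_of_lt_of_le ht hi))
  simp only [disjointed_eq_inter_compl, eq_iff_iff, mem_inter_iff, mem_iInter, mem_compl_iff]
  exact and_congr (key j le_rfl) (forall₂_congr fun i hi => not_congr (key i hi.le))

end FirstPassage

section Words

variable {N : ℕ} (f : Fin N → ℝ → ℝ)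

def prefixWord (m : ℕ) (ω : ℕ → Fin N) : Fin m → Fin N := fun k => ω k

theorem measurable_prefixWord (m : ℕ) : Measurable (prefixWord (N := N) m) :=
  measurable_pi_lambda _ fun k => measurable_pi_apply (k : ℕ)

def finWordIter : {m : ℕ} → (Fin m → Fin N) → ℝ → ℝ
  | 0, _ => id
  | _ + 1, w => f (w (Fin.last _)) ∘ finWordIter (Fin.init w)

theorem wordIter_eq_finWordIter (ω : ℕ → Fin N) :
    ∀ j, wordIter f ω j = finWordIter f (prefixWord j ω)
  | 0 => rfl
  | j + 1 => by
    rw [wordIter, finWordIter, wordIter_eq_finWordIter ω j]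
    rfl

theorem finWordIter_snoc {m : ℕ} (w : Fin m → Fin N) (i : Fin N) :
    finWordIter f (Fin.snoc w i) = f i ∘ finWordIter f w := by
  simp [finWordIter, Fin.init_snoc]

theorem finWordIter_append {j : ℕ} (u : Fin j → Fin N) :
    ∀ {r : ℕ} (v : Fin r → Fin N),
      finWordIter f (Fin.append u v) = finWordIter f v ∘ finWordIter f u
  | 0, v => by simp [finWordIter, Fin.append_right_nil u v rfl]
  | r + 1, v => by
    rw [← Fin.snoc_init_self v, Fin.append_snoc, finWordIter_snoc, finWordIter_snoc,
      finWordIter_append u (Fin.init v), Function.comp_assoc]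

theorem dependsOn_wordIter (j : ℕ) (x : ℝ) :
    DependsOn (fun ω => wordIter f ω j x) (Set.Iio j) := fun ω ω' h => by
  simp only [wordIter_eq_finWordIter]
  congr 1
  exact funext fun k => h k (Set.mem_Iio.mpr k.isLt)

theorem measurable_wordIter (j : ℕ) (x : ℝ) : Measurable fun ω => wordIter f ω j x := by
  simp only [wordIter_eq_finWordIter]
  exact (measurable_of_finite fun w : Fin j → Fin N => finWordIter f w x).comp
    (measurable_prefixWord j)

theorem wordIter_mem_Icc (hmaps : ∀ i, MapsTo (f i) (Icc 0 1) (Icc 0 1)) (ω : ℕ → Fin N)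
    {x : ℝ} (hx : x ∈ Icc (0 : ℝ) 1) : ∀ j, wordIter f ω j x ∈ Icc (0 : ℝ) 1
  | 0 => hx
  | j + 1 => hmaps (ω j) (wordIter_mem_Icc hmaps ω hx j)

end Words

section Bernoulli

variable {N : ℕ} (p : Fin N → ℝ)

noncomputable def stepMeasure : Measure (Fin N) := ∑ i, ENNReal.ofReal (p i) • Measure.dirac i

def IsBernoulliMeasure (ℙ : Measure (ℕ → Fin N)) : Prop :=
  ∀ m, ℙ.map (prefixWord m) = Measure.pi fun _ : Fin m => stepMeasure p

noncomputable def wordWeight {m : ℕ} (w : Fin m → Fin N) : ℝ≥0∞ := ∏ k, ENNReal.ofReal (p (w k))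

theorem stepMeasure_singleton (i : Fin N) : stepMeasure p {i} = ENNReal.ofReal (p i) := by
  classical
  simp [stepMeasure, Set.indicator_apply, Finset.sum_ite_eq']

instance : IsFiniteMeasure (stepMeasure p) := by
  constructor
  simp [stepMeasure, ENNReal.sum_lt_top]

theorem wordWeight_append {j r : ℕ} (u : Fin j → Fin N) (v : Fin r → Fin N) :
    wordWeight p (Fin.append u v) = wordWeight p u * wordWeight p v := by
  simp [wordWeight, Fin.prod_univ_add]

variable {p} {ℙ : Measure (ℕ → Fin N)} (hℙ : IsBernoulliMeasure p ℙ)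
include hℙ

theorem IsBernoulliMeasure.measure_prefixWord_preimage {m : ℕ} (U : Set (Fin m → Fin N)) :
    ℙ (prefixWord m ⁻¹' U) = ∑ w, wordWeight p w * U.indicator 1 w := by
  rw [← Measure.map_apply (measurable_prefixWord m) (Set.toFinite U).measurableSet, hℙ m]
  conv_lhs => rw [← Measure.sum_smul_dirac (Measure.pi fun _ : Fin m => stepMeasure p)]
  simp [Measure.dirac_apply, stepMeasure_singleton, wordWeight]

theorem IsBernoulliMeasure.isProbabilityMeasure : IsProbabilityMeasure ℙ := by
  constructor
  simpa [wordWeight] using hℙ.measure_prefixWord_preimage (m := 0) univ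

variable (f : Fin N → ℝ → ℝ)

theorem IsBernoulliMeasure.measure_wordIter_mem (r : ℕ) (y : ℝ) (T : Set ℝ) :
    ℙ {ω | wordIter f ω r y ∈ T} =
      ∑ v : Fin r → Fin N, wordWeight p v * T.indicator 1 (finWordIter f v y) := by
  simp only [wordIter_eq_finWordIter]
  exact hℙ.measure_prefixWord_preimage {v | finWordIter f v y ∈ T}

theorem IsBernoulliMeasure.measure_wordIter_one_mem (y : ℝ) (T : Set ℝ) :
    ℙ {ω | wordIter f ω 1 y ∈ T} = ∑ i, ENNReal.ofReal (p i) * T.indicator 1 (f i y) := by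
  rw [hℙ.measure_wordIter_mem]
  exact Fintype.sum_equiv (Equiv.funUnique (Fin 1) (Fin N)) _ _ fun v => by
    simp [wordWeight]
    rfl

theorem IsBernoulliMeasure.measure_prefixWord_mem_inter_wordIter_mem {j : ℕ}
    (U : Set (Fin j → Fin N)) (r : ℕ) (x : ℝ) (T : Set ℝ) :
    ℙ {ω | prefixWord j ω ∈ U ∧ wordIter f ω (j + r) x ∈ T} =
      ∑ u, wordWeight p u * U.indicator 1 u * ℙ {ω | wordIter f ω r (finWordIter f u x) ∈ T} := by
  have hcyl : {ω | prefixWord j ω ∈ U ∧ wordIter f ω (j + r) x ∈ T} = prefixWord (j + r) ⁻¹'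
      {w | (fun k => w (Fin.castAdd r k)) ∈ U ∧ finWordIter f w x ∈ T} := by
    ext ω
    simp only [wordIter_eq_finWordIter]
    rfl
  rw [hcyl, hℙ.measure_prefixWord_preimage, ← (Fin.appendEquiv j r).sum_comp,
    Fintype.sum_prod_type]
  refine Finset.sum_congr rfl fun u _ => ?_
  rw [hℙ.measure_wordIter_mem, Finset.mul_sum]
  refine Finset.sum_congr rfl fun v _ => ?_
  have hsplit : (fun k => Fin.append u v (Fin.castAdd r k)) = u := funext (Fin.append_left u v)
  classical
  simp only [Fin.appendEquiv, Equiv.coe_fn_mk, wordWeight_append, finWordIter_append,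
    Set.indicator_apply, mem_ofPred_eq, hsplit, Function.comp_apply, Pi.one_apply]
  split_ifs <;> simp_all [mul_comm]

theorem IsBernoulliMeasure.measure_inter_wordIter_mem_le {j r : ℕ} {x : ℝ} {Q : Set (ℕ → Fin N)}
    (hQ : DependsOn (· ∈ Q) (Set.Iio j)) {S T : Set ℝ} {b : ℝ≥0∞}
    (hS : ∀ ω ∈ Q, wordIter f ω j x ∈ S) (hb : ∀ y ∈ S, ℙ {ω | wordIter f ω r y ∈ T} ≤ b) :
    ℙ (Q ∩ {ω | wordIter f ω (j + r) x ∈ T}) ≤ ℙ Q * b := by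
  set U := prefixWord j '' Q
  have hQU : Q = prefixWord j ⁻¹' U := by
    refine (subset_preimage_image _ _).antisymm fun ω ⟨ω', hω', heq⟩ => ?_
    exact cast (hQ fun k hk => congrFun heq ⟨k, hk⟩) hω'
  have hQ_inter : Q ∩ {ω | wordIter f ω (j + r) x ∈ T} =
      {ω | prefixWord j ω ∈ U ∧ wordIter f ω (j + r) x ∈ T} := by
    rw [hQU]; rfl
  rw [hQ_inter, hℙ.measure_prefixWord_mem_inter_wordIter_mem, hQU,
    hℙ.measure_prefixWord_preimage, Finset.sum_mul]
  refine Finset.sum_le_sum fun u _ => ?_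
  by_cases hu : u ∈ U
  · obtain ⟨ω, hω, rfl⟩ := hu
    rw [← wordIter_eq_finWordIter]
    gcongr
    exact hb _ (hS ω hω)
  · simp [hu]

theorem IsBernoulliMeasure.measure_wordIter_lt_le_add
    (hmaps : ∀ i, MapsTo (f i) (Icc 0 1) (Icc 0 1)) {x ε t : ℝ} (hx : x ∈ Icc (0 : ℝ) 1)
    {m k : ℕ} (hk : m ≤ k) {a b : ℝ≥0∞}
    (hstay : x ≤ ε → ℙ {ω | ∀ j : ℕ, 1 ≤ j → j ≤ m → wordIter f ω j x < ε} ≤ a)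
    (hfar : ∀ r, ∀ y ∈ Icc ε 1, ℙ {ω | wordIter f ω r y < t} ≤ b) :
    ℙ {ω | wordIter f ω k x < t} ≤ a + b := by
  have := hℙ.isProbabilityMeasure
  set s : ℕ → Set (ℕ → Fin N) := fun j => {ω | ε ≤ wordIter f ω j x}
  have hnever : ℙ (⋂ j ∈ Finset.Iic m, (s j)ᶜ) ≤ a := by
    by_cases hxε : x ≤ ε
    · refine (measure_mono fun ω hω j _ hj => ?_).trans (hstay hxε)
      simpa [s] using mem_iInter₂.mp hω j (Finset.mem_Iic.mpr hj)
    · have hempty : (⋂ j ∈ Finset.Iic m, (s j)ᶜ) = ∅ := eq_empty_of_forall_notMem fun ω hω =>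
        mem_iInter₂.mp hω 0 (by simp) (show ε ≤ x from (not_le.mp hxε).le)
      rw [hempty, measure_empty]
      exact zero_le
  refine measure_le_add_of_disjointed ℙ
    (fun j => measurableSet_le measurable_const (measurable_wordIter f j x)) _ m hnever
    fun j hj => ?_
  obtain ⟨r, rfl⟩ := Nat.exists_eq_add_of_le (hj.trans hk)
  exact hℙ.measure_inter_wordIter_mem_le f (S := Icc ε 1) (T := Iio t)
    (dependsOn_mem_disjointed (fun i _ _ h => congrArg (ε ≤ ·) (dependsOn_wordIter f i x h)) j)
    (fun ω hω => ⟨disjointed_subset s j hω, (wordIter_mem_Icc f hmaps ω hx j).2⟩) (hfar r)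

end Bernoulli

section MarkovOperator

variable {N : ℕ} (f : Fin N → ℝ → ℝ) (p : Fin N → ℝ)

noncomputable def markovOp (μ : Measure ℝ) : Measure ℝ := ∑ i, ENNReal.ofReal (p i) • μ.map (f i)

-- membership in the class `P⁻_{M,α}`, for probability measures carried by `[0,1]`
def LowerTailBound (M α : ℝ) (μ : Measure ℝ) : Prop :=
  ∀ x ∈ Icc (0 : ℝ) 1, μ (Icc 0 x) ≤ ENNReal.ofReal (M * x ^ α)

theorem lowerTailBound_dirac {ε α z : ℝ} (hε : 0 < ε) (hα : 0 ≤ α) (hz : ε ≤ z) :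
    LowerTailBound (ε ^ (-α)) α (Measure.dirac z) := by
  intro s _
  by_cases hzs : z ≤ s
  · have hεs : ε ^ α ≤ s ^ α := Real.rpow_le_rpow hε.le (hz.trans hzs) hα
    have hone : 1 ≤ ε ^ (-α) * s ^ α := by
      rwa [Real.rpow_neg hε.le, one_le_inv_mul₀ (by positivity)]
    exact prob_le_one.trans (ENNReal.one_le_ofReal.mpr hone)
  · simp [hzs]

variable {f p} {ℙ : Measure (ℕ → Fin N)} (hℙ : IsBernoulliMeasure p ℙ)
include hℙ

theorem IsBernoulliMeasure.map_wordIter_succ_apply (hmeas : ∀ i, Measurable (f i)) (r : ℕ)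
    (z : ℝ) {T : Set ℝ} (hT : MeasurableSet T) :
    ℙ.map (fun ω => wordIter f ω (r + 1) z) T =
      markovOp f p (ℙ.map fun ω => wordIter f ω r z) T := by
  classical
  have hstep : ∀ i, (ℙ.map fun ω => wordIter f ω r z).map (f i) T =
      ℙ {ω | wordIter f ω r z ∈ f i ⁻¹' T} := fun i => by
    rw [Measure.map_apply (hmeas i) hT, Measure.map_apply (measurable_wordIter f r z) (hmeas i hT)]
    rfl
  have hlast := hℙ.measure_prefixWord_mem_inter_wordIter_mem f (j := r) univ 1 z T
  simp only [Set.mem_univ, true_and, indicator_univ, Pi.one_apply, mul_one] at hlast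
  rw [Measure.map_apply (measurable_wordIter f _ z) hT, markovOp, Measure.coe_finsetSum,
    Finset.sum_apply]
  simp only [Measure.smul_apply, smul_eq_mul, hstep]
  refine hlast.trans ?_
  simp only [hℙ.measure_wordIter_one_mem, hℙ.measure_wordIter_mem]
  simp only [Finset.mul_sum, Set.indicator_apply, Set.mem_preimage, Pi.one_apply]
  rw [Finset.sum_comm]
  exact Finset.sum_congr rfl fun _ _ => Finset.sum_congr rfl fun _ _ => by ring

variable {M α : ℝ} (hmeas : ∀ i, Measurable (f i)) (hmaps : ∀ i, MapsTo (f i) (Icc 0 1) (Icc 0 1))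
  (hclass : ∀ μ : Measure ℝ, IsProbabilityMeasure μ → μ (Icc (0 : ℝ) 1)ᶜ = 0 →
    LowerTailBound M α μ → LowerTailBound M α (markovOp f p μ))
  {z : ℝ} (hz : z ∈ Icc (0 : ℝ) 1) (hzM : LowerTailBound M α (Measure.dirac z))
include hmeas hmaps hclass hz hzM

theorem IsBernoulliMeasure.lowerTailBound_map_wordIter (r : ℕ) :
    LowerTailBound M α (ℙ.map fun ω => wordIter f ω r z) := by
  have := hℙ.isProbabilityMeasure
  induction r with
  | zero => simpa [wordIter, Measure.map_const] using hzM
  | succ r ih =>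
    have hsupp : (ℙ.map fun ω => wordIter f ω r z) (Icc 0 1)ᶜ = 0 := by
      rw [Measure.map_apply (measurable_wordIter f r z) measurableSet_Icc.compl]
      convert measure_empty (μ := ℙ)
      exact eq_empty_of_forall_notMem fun ω hω => hω (wordIter_mem_Icc f hmaps ω hz r)
    intro s hs
    rw [hℙ.map_wordIter_succ_apply hmeas r z measurableSet_Icc]
    exact hclass _ (Measure.isProbabilityMeasure_map (measurable_wordIter f r z).aemeasurable)
      hsupp ih s hs

theorem IsBernoulliMeasure.measure_wordIter_lt_le (r : ℕ) {t : ℝ} (ht : t ∈ Icc (0 : ℝ) 1) :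
    ℙ {ω | wordIter f ω r z < t} ≤ ENNReal.ofReal (M * t ^ α) :=
  calc ℙ {ω | wordIter f ω r z < t} ≤ (ℙ.map fun ω => wordIter f ω r z) (Icc 0 t) := by
        rw [Measure.map_apply (measurable_wordIter f r z) measurableSet_Icc]
        exact measure_mono fun ω hω => ⟨(wordIter_mem_Icc f hmaps ω hz r).1, le_of_lt hω⟩
    _ ≤ ENNReal.ofReal (M * t ^ α) :=
        hℙ.lowerTailBound_map_wordIter hmeas hmaps hclass hz hzM r t ht

end MarkovOperator

theorem stmt12_general (N : ℕ) (f : Fin N → ℝ → ℝ) (p d e : Fin N → ℝ)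
    (hadm : AdmissibleIFS N f p d e)
    (ε α δ M : ℝ)
    (hε : ε ∈ Ioo (0:ℝ) (1/2)) (hα : α ∈ Ioo (0:ℝ) 1) (hδ : δ ∈ Ioo (0:ℝ) 1)
    (hM : M = ε ^ (-α))
    -- the Markov operator preserves the class `P⁻_{M,α}`
    (hclass : ∀ μ : Measure ℝ, IsProbabilityMeasure μ → μ (Icc (0:ℝ) 1)ᶜ = 0 →
      (∀ x ∈ Icc (0:ℝ) 1, μ (Icc 0 x) ≤ ENNReal.ofReal (M * x ^ α)) →
      ∀ x ∈ Icc (0:ℝ) 1,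
        (∑ i, ENNReal.ofReal (p i) • Measure.map (f i) μ) (Icc 0 x)
          ≤ ENNReal.ofReal (M * x ^ α))
    -- `ℙ` is the product measure on `Σ = {1,…,N}^ℕ` with marginals `p`
    (ℙ : Measure (ℕ → Fin N))
    (hcyl : ∀ m : ℕ, ℙ.map (fun ω (k : Fin m) => ω k)
      = Measure.pi (fun _ : Fin m => ∑ j, ENNReal.ofReal (p j) • Measure.dirac j))
    -- the probability bound on `⋂_{j=1}^{⌊n^{1/4}⌋} A_{x,j}(ε)`
    (hA : ∀ n : ℕ, ∀ x ∈ Icc ((1 - δ) ^ ((nroot4 n : ℝ) / 2)) ε,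
      ℙ {ω | ∀ j : ℕ, 1 ≤ j → j ≤ nroot4 n → wordIter f ω j x < ε}
        ≤ ENNReal.ofReal ((1 - δ) ^ (α * (nroot4 n : ℝ) / 2))) :
    ∀ n k : ℕ, nroot4 n ≤ k →
      ∀ x ∈ Icc ((1 - δ) ^ ((nroot4 n : ℝ) / 2)) 1,
        ℙ {ω | wordIter f ω k x < (1 - δ) ^ ((nroot4 n : ℝ) / 2)}
          ≤ ENNReal.ofReal (2 * M * (1 - δ) ^ (α * (nroot4 n : ℝ) / 2)) := by
  intro n k hk x hx
  have hℙ : IsBernoulliMeasure p ℙ := hcyl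
  set m := nroot4 n
  set εn : ℝ := (1 - δ) ^ ((m : ℝ) / 2)
  set γ : ℝ := (1 - δ) ^ (α * (m : ℝ) / 2)
  have hδ1 : 0 < 1 - δ := by linarith [hδ.2]
  have hεn : εn ∈ Icc (0 : ℝ) 1 :=
    ⟨Real.rpow_nonneg hδ1.le _, Real.rpow_le_one hδ1.le (by linarith [hδ.1]) (by positivity)⟩
  have hγ : 0 ≤ γ := Real.rpow_nonneg hδ1.le _
  have hεnγ : εn ^ α = γ := by
    rw [← Real.rpow_mul hδ1.le]
    exact congrArg _ (by ring)
  have hM1 : 1 ≤ M := hM ▸ Real.one_le_rpow_of_pos_of_le_one_of_nonpos hε.1 (by linarith [hε.2])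
    (by linarith [hα.1])
  have hfar : ∀ r, ∀ y ∈ Icc ε 1, ℙ {ω | wordIter f ω r y < εn} ≤ ENNReal.ofReal (M * γ) :=
    fun r y hy => hεnγ ▸ hℙ.measure_wordIter_lt_le hadm.meas hadm.maps hclass
      ⟨hε.1.le.trans hy.1, hy.2⟩ (hM ▸ lowerTailBound_dirac hε.1 hα.1.le hy.1) r hεn
  calc ℙ {ω | wordIter f ω k x < εn}
      ≤ ENNReal.ofReal γ + ENNReal.ofReal (M * γ) :=
        hℙ.measure_wordIter_lt_le_add f hadm.maps ⟨hεn.1.trans hx.1, hx.2⟩ hk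
          (fun hxε => hA n x ⟨hx.1, hxε⟩) hfar
    _ ≤ ENNReal.ofReal (2 * M * γ) := by
        rw [← ENNReal.ofReal_add hγ (by positivity)]
        gcongr
        nlinarith

/-- (Lemma `mass_boundary`.) With `ε_n = (1-δ)^{⌊n^{1/4}⌋/2}` and
`γ_n = (1-δ)^{α⌊n^{1/4}⌋/2}`: for all `n`, all `k ≥ ⌊n^{1/4}⌋` and all `x ∈ [ε_n, 1]`,
`ℙ(f_i^k(x) < ε_n) ≤ 2 M γ_n`. -/
theorem stmt12 (N : ℕ) (f : Fin N → ℝ → ℝ) (p d e : Fin N → ℝ)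
    (hadm : AdmissibleIFS N f p d e)
    (ε α δ M : ℝ)
    (hε : ε ∈ Ioo (0:ℝ) (1/2)) (hα : α ∈ Ioo (0:ℝ) 1) (hδ : δ ∈ Ioo (0:ℝ) 1)
    (hM : M = ε ^ (-α))
    -- the Markov operator preserves the class `P⁻_{M,α}`
    (hclass : ∀ μ : Measure ℝ, IsProbabilityMeasure μ → μ (Icc (0:ℝ) 1)ᶜ = 0 →
      (∀ x ∈ Icc (0:ℝ) 1, μ (Icc 0 x) ≤ ENNReal.ofReal (M * x ^ α)) →
      ∀ x ∈ Icc (0:ℝ) 1,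
        (∑ i, ENNReal.ofReal (p i) • Measure.map (f i) μ) (Icc 0 x)
          ≤ ENNReal.ofReal (M * x ^ α))
    -- `ℙ` is the product measure on `Σ = {1,…,N}^ℕ` with marginals `p`
    (ℙ : Measure (ℕ → Fin N)) (hPprob : IsProbabilityMeasure ℙ)
    (hcyl : ∀ m : ℕ, ℙ.map (fun ω (k : Fin m) => ω k)
      = Measure.pi (fun _ : Fin m => ∑ j, ENNReal.ofReal (p j) • Measure.dirac j))
    -- the probability bound on `⋂_{j=1}^{⌊n^{1/4}⌋} A_{x,j}(ε)`
    (hA : ∀ n : ℕ, ∀ x ∈ Icc ((1 - δ) ^ ((nroot4 n : ℝ) / 2)) ε,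
      ℙ {ω | ∀ j : ℕ, 1 ≤ j → j ≤ nroot4 n → wordIter f ω j x < ε}
        ≤ ENNReal.ofReal ((1 - δ) ^ (α * (nroot4 n : ℝ) / 2))) :
    ∀ n k : ℕ, nroot4 n ≤ k →
      ∀ x ∈ Icc ((1 - δ) ^ ((nroot4 n : ℝ) / 2)) 1,
        ℙ {ω | wordIter f ω k x < (1 - δ) ^ ((nroot4 n : ℝ) / 2)}
          ≤ ENNReal.ofReal (2 * M * (1 - δ) ^ (α * (nroot4 n : ℝ) / 2)) :=
  stmt12_general N f p d e hadm ε α δ M hε hα hδ hM hclass ℙ hcyl hA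
end

section
/- Let (f₁,…,f_N; p₁,…,p_N) be an admissible iterated function system on [0,1] that is asymptotically stable on (0,1) with atomless invariant measure μ*, and let a ∈ (0,1/2) and I ⊆ (0,1) be an open interval with μ*(I) > 0. Then there exist r ∈ ℕ and a word (i₁,…,i_r) ∈ {1,…,N}^r such that f_{(i₁,…,i_r)}([a, 1−a]) ⊆ I. -/
open Set MeasureTheory Finset Filter

/-- Application of a finite word: `applyWord f [i₁, …, iₙ] x = f_{iₙ}(⋯ f_{i₁}(x) ⋯)`. -/
def applyWord {N : ℕ} (f : Fin N → ℝ → ℝ) (w : List (Fin N)) (x : ℝ) : ℝ :=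
  w.foldl (fun y a => f a y) x

/-!
Suppose no word maps `[a, 1-a]` into `I = (c, d)`. Words act monotonically, so every word sending
`1 - a` below `d` sends `a` to at most `c`. Expanding `Pⁿ δ_x` as a weighted sum of Dirac masses
over the words of length `n` gives `Pⁿ δ_{1-a} (-∞, d) ≤ Pⁿ δ_a (-∞, c]` for all `n`. Both sides
converge by asymptotic stability and the portmanteau theorem (the endpoints are `μ*`-null), hence
`μ* (-∞, d) ≤ μ* (-∞, c]`, i.e. `μ* I = 0`.
-/

open scoped ENNReal Topology

section Portmanteau

variable {Ω ι : Type*} [MeasurableSpace Ω] [TopologicalSpace Ω] [OpensMeasurableSpace Ω]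
  [HasOuterApproxClosed Ω]

lemma tendsto_measure_of_forall_integral_tendsto {L : Filter ι} {μs : ι → Measure Ω}
    (hμs : ∀ i, IsProbabilityMeasure (μs i)) {μ : Measure Ω} [IsProbabilityMeasure μ]
    (h : ∀ φ : BoundedContinuousFunction Ω ℝ,
      Tendsto (fun i => ∫ x, φ x ∂μs i) L (𝓝 (∫ x, φ x ∂μ)))
    {s : Set Ω} (hs : μ (frontier s) = 0) :
    Tendsto (fun i => μs i s) L (𝓝 (μ s)) :=
  ProbabilityMeasure.tendsto_measure_of_null_frontier_of_tendsto'
    (μ := ⟨μ, inferInstance⟩) (μs := fun i => ⟨μs i, hμs i⟩)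
    (ProbabilityMeasure.tendsto_iff_forall_integral_tendsto.2 h) hs

end Portmanteau

section IteratedFunctionSystem

variable {N : ℕ} {f : Fin N → ℝ → ℝ}

lemma applyWord_monotoneOn {s : Set ℝ} (hmaps : ∀ i, MapsTo (f i) s s)
    (hmono : ∀ i, MonotoneOn (f i) s) (w : List (Fin N)) : MonotoneOn (applyWord f w) s := by
  induction w with
  | nil => exact monotoneOn_id
  | cons i w ih => exact ih.comp (hmono i) (hmaps i)

variable (f) in
/-- The Markov operator `P` of the system. -/
noncomputable def transferOp (p : Fin N → ℝ) : Module.End ℝ≥0∞ (Measure ℝ) :=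
  ∑ i, ENNReal.ofReal (p i) • Measure.mapₗ (f i)

variable {p : Fin N → ℝ}

lemma transferOp_apply (hf : ∀ i, Measurable (f i)) (ν : Measure ℝ) :
    transferOp f p ν = ∑ i, ENNReal.ofReal (p i) • Measure.map (f i) ν := by
  simp [transferOp, Measure.mapₗ_apply_of_measurable (hf _)]

lemma coe_transferOp_pow (hf : ∀ i, Measurable (f i)) (n : ℕ) :
    ⇑(transferOp f p ^ n) =
      (fun ν : Measure ℝ => ∑ i, ENNReal.ofReal (p i) • Measure.map (f i) ν)^[n] := by
  rw [Module.End.coe_pow]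
  congr
  exact funext (transferOp_apply hf)

lemma isProbabilityMeasure_transferOp (hf : ∀ i, Measurable (f i)) (hp : ∀ i, 0 ≤ p i)
    (hsum : ∑ i, p i = 1) {ν : Measure ℝ} [IsProbabilityMeasure ν] :
    IsProbabilityMeasure (transferOp f p ν) := by
  have : ∀ i, IsProbabilityMeasure (Measure.map (f i) ν) :=
    fun i => Measure.isProbabilityMeasure_map (hf i).aemeasurable
  constructor
  simp only [transferOp_apply hf, Measure.finsetSum_apply, Measure.smul_apply, measure_univ,
    smul_eq_mul, mul_one]
  rw [← ENNReal.ofReal_sum_of_nonneg fun i _ => hp i, hsum, ENNReal.ofReal_one]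

lemma isProbabilityMeasure_transferOp_pow (hf : ∀ i, Measurable (f i)) (hp : ∀ i, 0 ≤ p i)
    (hsum : ∑ i, p i = 1) (ν : Measure ℝ) [IsProbabilityMeasure ν] (n : ℕ) :
    IsProbabilityMeasure ((transferOp f p ^ n) ν) := by
  induction n with
  | zero => simpa
  | succ n ih =>
    rw [pow_succ', Module.End.mul_apply]
    exact isProbabilityMeasure_transferOp hf hp hsum

lemma transferOp_pow_succ_dirac (hf : ∀ i, Measurable (f i)) (n : ℕ) (x : ℝ) :
    (transferOp f p ^ (n + 1)) (Measure.dirac x) =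
      ∑ i, ENNReal.ofReal (p i) • (transferOp f p ^ n) (Measure.dirac (f i x)) := by
  simp [pow_succ, transferOp_apply hf, Measure.map_dirac' (hf _)]

lemma transferOp_pow_dirac_le (hf : ∀ i, Measurable (f i)) {A B : Set ℝ} :
    ∀ (n : ℕ) (x y : ℝ),
      (∀ w : List (Fin N), w.length = n → applyWord f w x ∈ A → applyWord f w y ∈ B) →
      (transferOp f p ^ n) (Measure.dirac x) A ≤ (transferOp f p ^ n) (Measure.dirac y) B
  | 0, x, y, h => by
    have hxy : x ∈ A → y ∈ B := h [] rfl
    simp only [pow_zero, Module.End.one_apply, Measure.dirac_apply]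
    by_cases hx : x ∈ A
    · simp [hx, hxy hx]
    · simp [hx]
  | n + 1, x, y, h => by
    simp only [transferOp_pow_succ_dirac hf, Measure.finsetSum_apply, Measure.smul_apply,
      smul_eq_mul]
    refine Finset.sum_le_sum fun i _ => mul_le_mul_right ?_ _
    exact transferOp_pow_dirac_le hf n (f i x) (f i y)
      fun w hw => h (i :: w) (by simp [hw])

end IteratedFunctionSystem

theorem stmt13_general (N : ℕ) (f : Fin N → ℝ → ℝ) (p d₀ e₀ : Fin N → ℝ)
    (hadm : AdmissibleIFS N f p d₀ e₀)
    (μstar : Measure ℝ) (hprob : IsProbabilityMeasure μstar)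
    (hatomless : ∀ x : ℝ, μstar {x} = 0)
    -- asymptotic stability on `(0,1)`
    (hstable : ∀ μ : Measure ℝ, IsProbabilityMeasure μ → μ (Ioo (0:ℝ) 1) = 1 →
      ∀ φ : BoundedContinuousFunction ℝ ℝ,
        Tendsto
          (fun n => ∫ x, φ x ∂((fun ν : Measure ℝ =>
            ∑ i, ENNReal.ofReal (p i) • Measure.map (f i) ν)^[n] μ))
          atTop (nhds (∫ x, φ x ∂μstar)))
    (a c d : ℝ) (ha : a ∈ Ioo (0:ℝ) (1/2))
    (hIpos : 0 < μstar (Ioo c d)) :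
    ∃ (r : ℕ) (w : List (Fin N)), w.length = r ∧
      ∀ x ∈ Icc a (1 - a), applyWord f w x ∈ Ioo c d := by
  obtain ⟨ha0, ha2⟩ := ha
  by_contra! hcon
  have hword : ∀ w : List (Fin N), applyWord f w (1 - a) < d → applyWord f w a ≤ c := by
    intro w hwd
    by_contra! hwc
    obtain ⟨x, hx, hxI⟩ := hcon w.length w rfl
    have hmono := applyWord_monotoneOn hadm.maps (fun i => (hadm.mono i).monotoneOn) w
    have hx01 : x ∈ Icc (0:ℝ) 1 := ⟨by linarith [hx.1], by linarith [hx.2]⟩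
    exact hxI ⟨hwc.trans_le (hmono ⟨ha0.le, by linarith⟩ hx01 hx.1),
      (hmono hx01 ⟨by linarith, by linarith⟩ hx.2).trans_lt hwd⟩
  have hlim : ∀ x ∈ Ioo (0:ℝ) 1, ∀ s : Set ℝ, μstar (frontier s) = 0 →
      Tendsto (fun n => (transferOp f p ^ n) (Measure.dirac x) s) atTop (𝓝 (μstar s)) :=
    fun x hx s hs => tendsto_measure_of_forall_integral_tendsto
      (isProbabilityMeasure_transferOp_pow hadm.meas (fun i => (hadm.ppos i).le) hadm.psum _)
      (by simpa only [coe_transferOp_pow hadm.meas] using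
        hstable _ inferInstance (by simp [hx]))
      hs
  have hle : μstar (Iio d) ≤ μstar (Iic c) :=
    le_of_tendsto_of_tendsto'
      (hlim (1 - a) ⟨by linarith, by linarith⟩ _ (by rw [frontier_Iio]; exact hatomless d))
      (hlim a ⟨ha0, by linarith⟩ _ (by rw [frontier_Iic]; exact hatomless c))
      fun n => transferOp_pow_dirac_le hadm.meas n _ _ fun w _ => hword w
  obtain ⟨_, hcx, hxd⟩ := nonempty_of_measure_ne_zero hIpos.ne'
  have hsplit : μstar (Iio d) = μstar (Iic c) + μstar (Ioo c d) := by
    rw [← Iic_union_Ioo_eq_Iio (hcx.trans hxd)]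
    exact measure_union ((Iic_disjoint_Ioi le_rfl).mono_right Set.Ioo_subset_Ioi_self)
      measurableSet_Ioo
  rw [hsplit] at hle
  exact hIpos.ne' (nonpos_iff_eq_zero.1
    ((ENNReal.add_le_add_iff_left (measure_ne_top _ _)).1 (by rwa [add_zero])))

/-- For an admissible, asymptotically stable system with atomless
invariant measure `μ*`, and any open interval `I = (c, d) ⊆ (0,1)` of positive
`μ*`-measure, some finite word maps `[a, 1-a]` into `I`. -/
theorem stmt13 (N : ℕ) (f : Fin N → ℝ → ℝ) (p d₀ e₀ : Fin N → ℝ)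
    (hadm : AdmissibleIFS N f p d₀ e₀)
    (μstar : Measure ℝ) (hprob : IsProbabilityMeasure μstar)
    (hμ01 : μstar (Ioo (0:ℝ) 1) = 1)
    (hinv : (∑ i, ENNReal.ofReal (p i) • Measure.map (f i) μstar) = μstar)
    (hatomless : ∀ x : ℝ, μstar {x} = 0)
    -- asymptotic stability on `(0,1)`
    (hstable : ∀ μ : Measure ℝ, IsProbabilityMeasure μ → μ (Ioo (0:ℝ) 1) = 1 →
      ∀ φ : BoundedContinuousFunction ℝ ℝ,
        Tendsto
          (fun n => ∫ x, φ x ∂((fun ν : Measure ℝ =>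
            ∑ i, ENNReal.ofReal (p i) • Measure.map (f i) ν)^[n] μ))
          atTop (nhds (∫ x, φ x ∂μstar)))
    (a c d : ℝ) (ha : a ∈ Ioo (0:ℝ) (1/2))
    (hI : Ioo c d ⊆ Ioo (0:ℝ) 1) (hIpos : 0 < μstar (Ioo c d)) :
    ∃ (r : ℕ) (w : List (Fin N)), w.length = r ∧
      ∀ x ∈ Icc a (1 - a), applyWord f w x ∈ Ioo c d :=
  stmt13_general N f p d₀ e₀ hadm μstar hprob hatomless hstable a c d ha hIpos
end
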